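/- Fix M = (m_i) with m_1 > 6, m_i² < m_{i+1}, and an M-good N = (n_i), and let 𝓜 = {µ_𝓣 : 𝓣 ∈ 𝓖} be the associated norming set. For every j ∈ ℕ: if (x_i)_{i=1}^k is an S_{n_j}-admissible finite block basis of (e_n) in X_𝓜, then ‖Σ_{i=1}^k x_i‖_𝓜 ≥ (1/m_j) Σ_{i=1}^k ‖x_i‖_𝓜. Consequently X_𝓜 is an asymptotic (1/m_j)-ℓ1^{n_j} space for every j ∈ ℕ. -/

import Mathlib

open Filter Topology

open scoped Classical

noncomputable section

namespace Gasparis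

/-! ## Schreier families and admissibility -/

/-- `E < F` for finite sets: every element of `E` is smaller than every element of `F`. -/
def FinLt (E F : Finset ℕ) : Prop := ∀ i ∈ E, ∀ j ∈ F, i < j

/-- The Schreier families `S_n`. -/
def Schreier : ℕ → Set (Finset ℕ)
  | 0 => {F | F.card ≤ 1}
  | n + 1 => {F | F = ∅ ∨ ∃ (k : ℕ) (G : ℕ → Finset ℕ), 0 < k ∧
      (∀ i < k, G i ∈ Schreier n ∧ (G i).Nonempty) ∧
      (∀ i j, i < j → j < k → FinLt (G i) (G j)) ∧
      (∀ j ∈ G 0, k ≤ j) ∧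
      F = (Finset.range k).biUnion G}

/-- Minimum of a finite set of naturals (junk value `0` for `∅`). -/
def minF (I : Finset ℕ) : ℕ := sInf (I : Set ℕ)

/-- Minimum of the support of a finitely supported sequence. -/
def minSupp (f : ℕ →₀ ℝ) : ℕ := minF f.support

/-- `I 0 < I 1 < ⋯ < I (k-1)` is an `S_n`-admissible collection. -/
def Admissible (n k : ℕ) (I : ℕ → Finset ℕ) : Prop :=
  (∀ i < k, (I i).Nonempty) ∧
  (∀ i j, i < j → j < k → FinLt (I i) (I j)) ∧
  ((Finset.range k).image fun i => minF (I i)) ∈ Schreier n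

/-- An (unordered) family of finite sets is `S_n`-admissible. -/
def FamAdmissible (n : ℕ) (𝓕 : Finset (Finset ℕ)) : Prop :=
  (∀ I ∈ 𝓕, I.Nonempty) ∧
  (∀ I ∈ 𝓕, ∀ J ∈ 𝓕, I ≠ J → FinLt I J ∨ FinLt J I) ∧
  𝓕.image minF ∈ Schreier n

/-- `F` is a maximal (under inclusion) member of `S_n`. -/
def MaximalSchreier (n : ℕ) (F : Finset ℕ) : Prop :=
  F ∈ Schreier n ∧ ∀ G ∈ Schreier n, F ⊆ G → G = F

/-! ## The Schreier and conditional Schreier norms on `c₀₀ = ℕ →₀ ℝ` -/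

/-- The `n`-th Schreier norm on `c₀₀`. -/
def schreierNorm (n : ℕ) (x : ℕ →₀ ℝ) : ℝ :=
  sSup {r : ℝ | ∃ F ∈ Schreier n, r = ∑ i ∈ F, |x i|}

/-- The `n`-th conditional Schreier norm on `c₀₀`. -/
def cschreierNorm (n : ℕ) (x : ℕ →₀ ℝ) : ℝ :=
  sSup {r : ℝ | ∃ (k : ℕ) (J : ℕ → Finset ℕ),
    (∀ i < k, ∃ a b : ℕ, J i = Finset.Icc a b) ∧ Admissible n k J ∧
    r = ∑ i ∈ Finset.range k, |∑ p ∈ J i, x p|}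

/-! ## Block sequences, described by their coefficients -/

/-- A block basis, given by the (finitely supported) coefficient sequences of its vectors:
successive nonempty supports. -/
def IsBlockSeq (u : ℕ → ℕ →₀ ℝ) : Prop :=
  (∀ k, u k ≠ 0) ∧ ∀ k, ∀ i ∈ (u k).support, ∀ j ∈ (u (k + 1)).support, i < j

/-- `v` is a block basis of the block basis `u`. -/
def IsBlockSeqOf (v u : ℕ → ℕ →₀ ℝ) : Prop :=
  IsBlockSeq v ∧ ∃ d : ℕ → ℕ →₀ ℝ, IsBlockSeq d ∧
    ∀ k, v k = (d k).sum fun i a => a • u i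

/-- The vector of `X` with coefficients `f` with respect to the sequence `e`. -/
def vecIn {X : Type*} [AddCommGroup X] [Module ℝ X] (e : ℕ → X) (f : ℕ →₀ ℝ) : X :=
  f.sum fun i a => a • e i

/-! ## Schauder bases -/

/-- A Schauder basis of a Banach space, bundled with its biorthogonal functionals. -/
structure SchauderBasis (X : Type*) [NormedAddCommGroup X] [NormedSpace ℝ X] where
  e : ℕ → X
  coord : ℕ → X →L[ℝ] ℝ
  biorth : ∀ i j, coord i (e j) = if i = j then (1 : ℝ) else 0
  expand : ∀ x : X, Tendsto (fun k => ∑ i ∈ Finset.range k, coord i x • e i) atTop (𝓝 x)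

variable {X : Type*}

def NormalizedBasis [NormedAddCommGroup X] [NormedSpace ℝ X] (b : SchauderBasis X) : Prop :=
  ∀ i, ‖b.e i‖ = 1

/-- Every projection onto an interval of coordinates has norm at most `1`. -/
def Bimonotone [NormedAddCommGroup X] [NormedSpace ℝ X] (b : SchauderBasis X) : Prop :=
  ∀ (x : X) (a c : ℕ), ‖∑ i ∈ Finset.Icc a c, b.coord i x • b.e i‖ ≤ ‖x‖

/-- The biorthogonal functionals form a basis of the dual: the expansion of every
continuous functional converges to it. -/
def Shrinking [NormedAddCommGroup X] [NormedSpace ℝ X] (b : SchauderBasis X) : Prop :=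
  ∀ f : X →L[ℝ] ℝ,
    Tendsto (fun k => ‖f - ∑ i ∈ Finset.range k, f (b.e i) • b.coord i‖) atTop (𝓝 (0 : ℝ))

def BoundedlyComplete [NormedAddCommGroup X] [NormedSpace ℝ X] (b : SchauderBasis X) : Prop :=
  ∀ a : ℕ → ℝ, (∃ C : ℝ, ∀ k, ‖∑ i ∈ Finset.range k, a i • b.e i‖ ≤ C) →
    ∃ x : X, Tendsto (fun k => ∑ i ∈ Finset.range k, a i • b.e i) atTop (𝓝 x)

/-- `1`-unconditionality: changing signs of coefficients does not increase the norm. -/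
def OneUnconditional [NormedAddCommGroup X] [NormedSpace ℝ X] (b : SchauderBasis X) : Prop :=
  ∀ (a ε : ℕ → ℝ) (F : Finset ℕ), (∀ i, ε i = 1 ∨ ε i = -1) →
    ‖∑ i ∈ F, (ε i * a i) • b.e i‖ ≤ ‖∑ i ∈ F, a i • b.e i‖

/-! ## Spreading models, asymptotic `ℓ¹` and the distortion property -/

/-- `(x_n)` is an `ε`-`ℓ¹ⁿ` spreading model. -/
def SpreadingModelL1 [NormedAddCommGroup X] [NormedSpace ℝ X]
    (x : ℕ → X) (ε : ℝ) (n : ℕ) : Prop :=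
  ∀ F ∈ Schreier n, ∀ a : ℕ → ℝ, ε * ∑ i ∈ F, |a i| ≤ ‖∑ i ∈ F, a i • x i‖

/-- Every normalized block basis of `(e_n)` is an `ε`-`ℓ¹ⁿ` spreading model. -/
def AsymptoticL1 [NormedAddCommGroup X] [NormedSpace ℝ X]
    (b : SchauderBasis X) (ε : ℝ) (n : ℕ) : Prop :=
  ∀ u : ℕ → ℕ →₀ ℝ, IsBlockSeq u → (∀ k, ‖vecIn b.e (u k)‖ = 1) →
    SpreadingModelL1 (fun k => vecIn b.e (u k)) ε n

/-- The modulus `τ(U, δ) ∈ ℕ∞` of the block subspace `U` generated by the block basis `u`. -/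
def tau [NormedAddCommGroup X] [NormedSpace ℝ X]
    (e : ℕ → X) (u : ℕ → ℕ →₀ ℝ) (δ : ℝ) : ℕ∞ :=
  sSup {z : ℕ∞ | ∃ ζ : ℕ, z = (ζ : ℕ∞) ∧
    ∀ v : ℕ → ℕ →₀ ℝ, IsBlockSeqOf v u → (∀ k, ‖vecIn e (v k)‖ = 1) →
      ∃ φ : ℕ → ℕ, StrictMono φ ∧ SpreadingModelL1 (fun k => vecIn e (v (φ k))) δ ζ}

/-- The `(d, N, P, a)` distortion property (with the standing assumptions on `d, N, P, a`). -/
structure DistortionProperty [NormedAddCommGroup X] [NormedSpace ℝ X]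
    (b : SchauderBasis X) (d : ℝ) (N P : ℕ → ℕ) (δ : ℕ → ℝ) : Prop where
  one_lt_d : 1 < d
  N_mono : StrictMono N
  P_mono : StrictMono P
  N_le_P : ∀ i, (if i = 0 then 1 else N (i - 1)) ≤ P i
  P_lt_N : ∀ i, 2 * P i < N i
  δ_pos : ∀ i, 0 < δ i
  δ_anti : ∀ i, δ (i + 1) ≤ δ i
  δ_null : Tendsto δ atTop (𝓝 (0 : ℝ))
  asymptotic : ∀ j, AsymptoticL1 b (δ j) (N j)
  tau_lt : ∀ j, ∀ u : ℕ → ℕ →₀ ℝ, IsBlockSeq u → tau b.e u (d * δ j) < (P j : ℕ∞)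

/-! ## Subspaces, hereditary indecomposability, total incomparability, distortion -/

/-- An (infinite-dimensional, closed) subspace of a Banach space. -/
def IsBanachSubspace [NormedAddCommGroup X] [NormedSpace ℝ X] (Y : Submodule ℝ X) : Prop :=
  IsClosed (Y : Set X) ∧ ¬ FiniteDimensional ℝ Y

/-- Hereditarily indecomposable. -/
def HI (X : Type*) [NormedAddCommGroup X] [NormedSpace ℝ X] : Prop :=
  ∀ Y Z : Submodule ℝ X, IsBanachSubspace Y → IsBanachSubspace Z → Y ⊓ Z = ⊥ →
    ¬ IsClosed ((Y ⊔ Z : Submodule ℝ X) : Set X)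

/-- No subspace of `X` is isomorphic to a subspace of `Y`. -/
def TotallyIncomparable (X Y : Type*) [NormedAddCommGroup X] [NormedSpace ℝ X]
    [NormedAddCommGroup Y] [NormedSpace ℝ Y] : Prop :=
  ∀ (U : Submodule ℝ X) (V : Submodule ℝ Y), IsBanachSubspace U → IsBanachSubspace V →
    IsEmpty (U ≃L[ℝ] V)

/-- An equivalent norm on `X`. -/
structure IsEquivNorm [NormedAddCommGroup X] [NormedSpace ℝ X] (Nn : X → ℝ) : Prop where
  add_le : ∀ x y : X, Nn (x + y) ≤ Nn x + Nn y
  smul_eq : ∀ (a : ℝ) (x : X), Nn (a • x) = |a| * Nn x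
  lower : ∃ c : ℝ, 0 < c ∧ ∀ x : X, c * ‖x‖ ≤ Nn x
  upper : ∃ C : ℝ, 0 < C ∧ ∀ x : X, Nn x ≤ C * ‖x‖

def ArbitrarilyDistortable (X : Type*) [NormedAddCommGroup X] [NormedSpace ℝ X] : Prop :=
  ∀ lam : ℝ, 1 < lam → ∃ Nn : X → ℝ, IsEquivNorm Nn ∧
    ∀ Y : Submodule ℝ X, IsBanachSubspace Y →
      ∃ x ∈ Y, ∃ y ∈ Y, x ≠ 0 ∧ y ≠ 0 ∧ ‖x‖ = ‖y‖ ∧ lam < Nn x / Nn y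

/-- Reflexivity: the canonical embedding into the double dual is surjective. -/
def IsReflexiveSpace (X : Type*) [NormedAddCommGroup X] [NormedSpace ℝ X] : Prop :=
  Function.Surjective (NormedSpace.inclusionInDoubleDual ℝ X)

/-- A bundled (real, infinite-dimensional or not) Banach space. -/
structure BanachSpaceB where
  carrier : Type
  [grp : NormedAddCommGroup carrier]
  [mod : NormedSpace ℝ carrier]
  [comp : CompleteSpace carrier]

attribute [instance] BanachSpaceB.grp BanachSpaceB.mod BanachSpaceB.comp

/-! ## `M`-good sequences -/

/-- The sequence `f_j^N` (0-indexed: `fN m n j` is the paper's `f_{j+1}^N`). -/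
def fN (m n : ℕ → ℕ) : ℕ → ℕ
  | 0 => 1
  | j + 1 => sSup {s : ℕ | ∃ ρ : ℕ → ℕ,
      (∏ i ∈ Finset.range (j + 1), m i ^ ρ i) < m (j + 1) ^ 3 ∧
      s = ∑ i ∈ Finset.range (j + 1), ρ i * n i}

/-- Standing assumptions on the fixed sequences `M = (m_i)` and `L = (l_i)`. -/
structure MLParams (m l : ℕ → ℕ) : Prop where
  m_mono : StrictMono m
  m_six : 6 < m 0
  m_sq : ∀ i, m i ^ 2 < m (i + 1)
  l_mono : StrictMono l
  l_four : 4 < l 0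
  l_exp : ∀ i, m i < 2 ^ l i

/-- `N = (n_i)` (an infinite subset of `ℕ`, given by its increasing enumeration)
is `M`-good: `l_j (f_j^N + 1) < n_j` for all `j`. -/
def MGoodSeq (m l n : ℕ → ℕ) : Prop :=
  StrictMono n ∧ ∀ j, l j * (fN m n j + 1) < n j

/-! ## Appropriate trees -/

/-- A node of a tree: a nonempty list of triples `(m-entry, interval, sign)`. -/
abbrev GNode := List (ℕ × Finset ℕ × ℤ)

def mEnt (α : GNode) : ℕ := (α.getLastD (0, ∅, 1)).1
def iEnt (α : GNode) : Finset ℕ := (α.getLastD (0, ∅, 1)).2.1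
def sEnt (α : GNode) : ℤ := (α.getLastD (0, ∅, 1)).2.2

/-- `α` is a terminal node of the tree `T`. -/
def IsTerminalIn (T : Finset GNode) (α : GNode) : Prop :=
  ∀ β ∈ T, α <+: β → β = α

/-- The immediate successors of `α` in `T`. -/
def childrenIn (T : Finset GNode) (α : GNode) : Finset GNode :=
  T.filter fun β => β.length = α.length + 1 ∧ α <+: β

/-- Appropriate trees (with respect to the data `M = (m_i)`, `N = (n_i)`). -/
def IsAppropriate (m n : ℕ → ℕ) (T : Finset GNode) : Prop :=
  T.Nonempty ∧
  (∀ α ∈ T, α ≠ []) ∧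
  (∀ α ∈ T, ∀ k, 0 < k → k ≤ α.length → α.take k ∈ T) ∧
  (∀ α ∈ T, ∀ β ∈ T, α.length = 1 → β.length = 1 → α = β) ∧
  (∀ α ∈ T, ∀ t ∈ α, ((t : ℕ × Finset ℕ × ℤ).2.2 = 1 ∨ t.2.2 = -1) ∧ t.2.1.Nonempty) ∧
  (∀ α ∈ T, IsTerminalIn T α → mEnt α = 0 ∧ ∃ p : ℕ, iEnt α = {p}) ∧
  (∀ α ∈ T, ¬ IsTerminalIn T α → ∃ j : ℕ, mEnt α = m j ∧
    FamAdmissible (n j) ((childrenIn T α).image iEnt) ∧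
    iEnt α = (childrenIn T α).sup iEnt)

/-- The family `𝒢` of appropriate trees. -/
def 𝒢 (m n : ℕ → ℕ) : Set (Finset GNode) := {T | IsAppropriate m n T}

/-- The root of a tree. -/
def rootOf (T : Finset GNode) : GNode :=
  if h : (T.filter fun α => α.length = 1).Nonempty then h.choose else []

/-- `m(α)`: product of the `M`-entries of the predecessor of `α`. -/
def mWeight (α : GNode) : ℕ := (α.dropLast.map fun t => t.1).prod

/-- `ε(α)`: product of the signs of the proper predecessors of `α`. -/
def epsProd (α : GNode) : ℤ := (α.dropLast.map fun t => t.2.2).prod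

/-- `n(α)`: sum of the `n_i` over the `M`-entries `m_i` of the predecessor of `α`. -/
def nVal (m n : ℕ → ℕ) (α : GNode) : ℕ :=
  (α.dropLast.map fun t => n (sInf {j | m j = t.1})).sum

/-- The point `p_α` of a terminal node. -/
def pOf (α : GNode) : ℕ := minF (iEnt α)

/-- The measure `mu_𝒯` associated to a tree. -/
def treeMeasure (T : Finset GNode) : ℕ →₀ ℝ :=
  ∑ α ∈ T.filter (fun α => IsTerminalIn T α),
    ((mWeight α : ℝ)⁻¹ * ((epsProd α * sEnt α : ℤ) : ℝ)) • Finsupp.single (pOf α) (1 : ℝ)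

/-- The weight `w(𝒯)`. -/
def treeWeight (T : Finset GNode) : ℕ :=
  if T.card = 1 then 1 else mEnt (rootOf T)

/-- Action of a finitely supported measure on an element of `c₀₀`. -/
def mpair (mu x : ℕ →₀ ℝ) : ℝ := mu.sum fun i c => c * x i

/-- The norming set `𝓜 = {mu_𝒯 : 𝒯 ∈ 𝒢}`. -/
def normingSetOf (m n : ℕ → ℕ) : Set (ℕ →₀ ℝ) :=
  {mu | ∃ T ∈ 𝒢 m n, mu = treeMeasure T}

/-- The norm of `X_𝓜` on `c₀₀`. -/
def mNorm (m n : ℕ → ℕ) (x : ℕ →₀ ℝ) : ℝ :=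
  sSup {r : ℝ | ∃ mu ∈ normingSetOf m n, r = mpair mu x}

/-- A family of trees is `S_k`-admissible if the family of root intervals is. -/
def TreeFamAdmissible (k : ℕ) (G₀ : Finset (Finset GNode)) : Prop :=
  FamAdmissible k (G₀.image fun T => iEnt (rootOf T))

/-! ## The repeated averages hierarchy -/

/-- Auxiliary step for the repeated averages hierarchy. -/
def ravgS (f : Set ℕ → ℕ → (ℕ →₀ ℝ)) (R : Set ℕ) : ℕ → (ℕ →₀ ℝ)
  | 0 => ((sInf R : ℕ) : ℝ)⁻¹ • ∑ i ∈ Finset.range (sInf R), f R i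
  | k + 1 =>
    let R' : Set ℕ := {r ∈ R | ∀ j ∈ (ravgS f R k).support, j < r}
    ((sInf R' : ℕ) : ℝ)⁻¹ • ∑ i ∈ Finset.range (sInf R'), f R' i

/-- The repeated averages hierarchy `ξ_k^R` (`k` 0-indexed). -/
def ravg : ℕ → Set ℕ → ℕ → (ℕ →₀ ℝ)
  | 0 => fun R k => Finsupp.single (Nat.nth (· ∈ R) k) 1
  | ξ + 1 => ravgS (ravg ξ)

/-- `‖mu‖_k = sup{mu(F) : F ∈ S_k}`. -/
def measNorm (k : ℕ) (mu : ℕ →₀ ℝ) : ℝ :=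
  sSup {r : ℝ | ∃ F ∈ Schreier k, r = ∑ i ∈ F, mu i}

/-- The sequence of minima of supports of a block basis. -/
def pSeq (u : ℕ → ℕ →₀ ℝ) (k : ℕ) : ℕ := minSupp (u k)

/-- `v` is a generic `(ε, ξ)` average of the block basis `u`. -/
def IsGenericAvg (u : ℕ → ℕ →₀ ℝ) (ε : ℝ) (ξ : ℕ) (v : ℕ →₀ ℝ) : Prop :=
  ∃ R : Set ℕ, R.Infinite ∧ R ⊆ Set.range (pSeq u) ∧
    measNorm (ξ - 1) (ravg ξ R 0) < ε ∧
    v = (ravg ξ R 0).sum fun q c => c • u (sInf {k | pSeq u k = q})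

/-- `v` is an `(ε, ξ)` average of `u`: a generic `(ε, ξ)` average of a normalized
(w.r.t. the norm `nrm`) block basis of `u`. -/
def IsAvg (nrm : (ℕ →₀ ℝ) → ℝ) (u : ℕ → ℕ →₀ ℝ) (ε : ℝ) (ξ : ℕ) (v : ℕ →₀ ℝ) : Prop :=
  ∃ w : ℕ → ℕ →₀ ℝ, IsBlockSeqOf w u ∧ (∀ k, nrm (w k) = 1) ∧ IsGenericAvg w ε ξ v

/-- `x` is a smoothly normalized `(ε, ξ)` average of `u`. -/
def IsSmoothNormAvg (nrm : (ℕ →₀ ℝ) → ℝ) (u : ℕ → ℕ →₀ ℝ) (ε : ℝ) (ξ : ℕ)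
    (x : ℕ →₀ ℝ) : Prop :=
  ∃ v : ℕ →₀ ℝ, IsAvg nrm u ε ξ v ∧ (1 : ℝ) / 2 ≤ nrm v ∧ x = (nrm v)⁻¹ • v

/-! ## Infinite subsets of `ℕ` as points of the Cantor space -/

/-- The increasing enumeration of the set coded by `S : ℕ → Bool` (1st element = index 0). -/
def enumOf (S : ℕ → Bool) : ℕ → ℕ := Nat.nth fun i => S i = true

/-- The set coded by `S` is `M`-good. -/
def MGoodB (m l : ℕ → ℕ) (S : ℕ → Bool) : Prop := MGoodSeq m l (enumOf S)

/-- The infinite subsets of the set coded by `N₀`, as a topological (sub)space of the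
Cantor space `ℕ → Bool` with the product (pointwise convergence) topology. -/
def SubsetsOf (N₀ : ℕ → Bool) : Type :=
  {S : ℕ → Bool // {i | S i = true}.Infinite ∧ ∀ i, S i = true → N₀ i = true}

instance (N₀ : ℕ → Bool) : TopologicalSpace (SubsetsOf N₀) :=
  instTopologicalSpaceSubtype



/-!
Every functional `µ_𝒯` has all its coefficients in `[-1, 1]`: the children of a node containing a
given point `p` are told apart by their `M`-entry and their sign, so the mass `1 / m(δ)` of the
terminal nodes at `p` shrinks geometrically down the tree, as `∑ 1 / m_i ≤ 1 / 6`. Hence the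
supremum defining `‖·‖_𝓜` is finite.

For an `S_{n_j}`-admissible block sequence `(x_i)`, choose almost norming trees for the `x_i` and
cut all their intervals down to `supp x_i`. As Schreier families are spreading and hereditary, the
results are still appropriate and their roots form an `S_{n_j}`-admissible family, so they can be
grafted below a common root `(m_j, ⋃ I_i, +1)`; the new functional evaluates `∑ x_i` to
`(1 / m_j) ∑ µ_i(x_i)`. The estimate for `∑ a_i u_i` follows by applying this to the vectors
`a_i u_i`, using `|a| ‖x‖ ≤ ‖a x‖` (flip the sign of the root) and `i ≤ min supp u_i`.
-/

/-! ### Schreier families -/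

lemma _root_.Finset.exists_strictMonoOn_enum (F : Finset ℕ) :
    ∃ e : ℕ → ℕ, StrictMonoOn e (Set.Iio F.card) ∧ (Finset.range F.card).image e = F := by
  set σ := F.orderEmbOfFin rfl
  refine ⟨fun s => if h : s < F.card then σ ⟨s, h⟩ else 0, fun s hs t ht hst => ?_, ?_⟩
  · simp only [Set.mem_Iio] at hs ht
    simpa [hs, ht] using hst
  · ext a
    simp only [Finset.mem_image, Finset.mem_range]
    constructor
    · rintro ⟨s, hs, rfl⟩
      rw [dif_pos hs]
      exact F.orderEmbOfFin_mem rfl ⟨s, hs⟩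
    · intro ha
      obtain ⟨s, rfl⟩ : a ∈ Set.range σ := by rw [Finset.range_orderEmbOfFin]; exact ha
      exact ⟨s, s.2, by simp⟩

namespace Schreier

lemma empty_mem (n : ℕ) : (∅ : Finset ℕ) ∈ Schreier n := by
  cases n with
  | zero => simp [Schreier]
  | succ n => exact Or.inl rfl

/-- Unlike in the definition of `S_{n+1}`, the blocks may be empty. -/
lemma biUnion_mem_succ {n k : ℕ} {C : ℕ → Finset ℕ} (hC : ∀ i < k, C i ∈ Schreier n)
    (hord : ∀ i j, i < j → j < k → FinLt (C i) (C j)) (hk : ∀ i < k, ∀ a ∈ C i, k ≤ a) :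
    (Finset.range k).biUnion C ∈ Schreier (n + 1) := by
  set used := (Finset.range k).filter fun i => (C i).Nonempty
  have hunion : (Finset.range k).biUnion C = used.biUnion C := by
    ext a
    simp only [used, Finset.mem_biUnion, Finset.mem_filter]
    exact ⟨fun ⟨i, hi, ha⟩ => ⟨i, ⟨hi, a, ha⟩, ha⟩, fun ⟨i, ⟨hi, _⟩, ha⟩ => ⟨i, hi, ha⟩⟩
  rcases used.eq_empty_or_nonempty with h | h
  · exact Or.inl (by rw [hunion, h, Finset.biUnion_empty])
  obtain ⟨e, he, hrange⟩ := used.exists_strictMonoOn_enum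
  have he_mem : ∀ s < used.card, e s < k ∧ (C (e s)).Nonempty := fun s hs => by
    have : e s ∈ used := hrange ▸ Finset.mem_image_of_mem e (Finset.mem_range.2 hs)
    simpa [used] using this
  have hcard : used.card ≤ k := (Finset.card_filter_le _ _).trans (Finset.card_range k).le
  refine Or.inr ⟨used.card, C ∘ e, h.card_pos, fun s hs => ⟨hC _ (he_mem s hs).1,
    (he_mem s hs).2⟩, fun s t hst ht => hord _ _ (he (hst.trans ht) ht hst) (he_mem t ht).1,
    fun a ha => hcard.trans (hk _ (he_mem 0 h.card_pos).1 a ha), ?_⟩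
  conv_lhs => rw [hunion, ← hrange, Finset.image_biUnion]
  rfl

/-- Schreier families are spreading and hereditary. -/
lemma of_strictMonoOn {n : ℕ} {F G : Finset ℕ} {ψ : ℕ → ℕ} (hF : F ∈ Schreier n)
    (hψ : StrictMonoOn ψ G) (hmaps : Set.MapsTo ψ G F) (hle : ∀ a ∈ G, ψ a ≤ a) :
    G ∈ Schreier n := by
  induction n generalizing F G with
  | zero =>
    exact (Finset.card_le_card_of_injOn ψ hmaps hψ.injOn).trans hF
  | succ n ih =>
    rcases hF with rfl | ⟨k, B, -, hB, hord, hmin, rfl⟩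
    · rw [Finset.eq_empty_of_forall_notMem fun a ha => Finset.notMem_empty _ (hmaps ha)]
      exact empty_mem _
    have hG : G = (Finset.range k).biUnion fun i => G.filter fun a => ψ a ∈ B i := by
      ext a
      simp only [Finset.mem_biUnion, Finset.mem_filter, Finset.mem_range]
      refine ⟨fun ha => ?_, fun ⟨_, _, ha, _⟩ => ha⟩
      obtain ⟨i, hi, hψa⟩ := Finset.mem_biUnion.1 (hmaps ha)
      exact ⟨i, Finset.mem_range.1 hi, ha, hψa⟩
    rw [hG]
    refine biUnion_mem_succ (fun i hi => ?_) (fun i j hij hj a ha b hb => ?_) (fun i hi a ha => ?_)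
    · exact ih (hB i hi).1 (hψ.mono (Finset.coe_subset.2 (Finset.filter_subset _ _)))
        (fun a ha => (Finset.mem_filter.1 ha).2) fun a ha => hle a (Finset.mem_filter.1 ha).1
    · rw [Finset.mem_filter] at ha hb
      exact (hψ.lt_iff_lt ha.1 hb.1).1 (hord i j hij hj _ ha.2 _ hb.2)
    · rw [Finset.mem_filter] at ha
      refine le_trans ?_ (hle a ha.1)
      rcases Nat.eq_zero_or_pos i with rfl | hi0
      · exact hmin _ ha.2
      · obtain ⟨b, hb⟩ := (hB 0 (by omega)).2
        exact (hmin b hb).trans (hord 0 i hi0 hi b hb _ ha.2).le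

lemma image_mem {ι : Type*} {n : ℕ} {F : Finset ℕ} (hF : F ∈ Schreier n) {S : Finset ι}
    {f g : ι → ℕ} (hgF : ∀ i ∈ S, g i ∈ F) (hfg : ∀ i ∈ S, ∀ i' ∈ S, f i < f i' → g i < g i')
    (hgf : ∀ i ∈ S, g i ≤ f i) : S.image f ∈ Schreier n := by
  rcases isEmpty_or_nonempty ι with hι | hι
  · rw [Finset.eq_empty_of_isEmpty S, Finset.image_empty]
    exact empty_mem n
  have hinv : ∀ i ∈ S, Function.invFunOn f S (f i) ∈ S ∧ f (Function.invFunOn f S (f i)) = f i :=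
    fun i hi => Function.invFunOn_pos ⟨i, hi, rfl⟩
  refine of_strictMonoOn hF (ψ := fun q => g (Function.invFunOn f S q)) ?_ ?_ ?_
  · rintro _ ha _ hb hab
    obtain ⟨i, hi, rfl⟩ := Finset.mem_image.1 ha
    obtain ⟨i', hi', rfl⟩ := Finset.mem_image.1 hb
    exact hfg _ (hinv i hi).1 _ (hinv i' hi').1 (by rwa [(hinv i hi).2, (hinv i' hi').2])
  · rintro _ ha
    obtain ⟨i, hi, rfl⟩ := Finset.mem_image.1 ha
    exact hgF _ (hinv i hi).1
  · rintro _ ha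
    obtain ⟨i, hi, rfl⟩ := Finset.mem_image.1 ha
    simpa only [(hinv i hi).2] using hgf _ (hinv i hi).1

end Schreier

/-! ### Admissible families -/

lemma minF_mem {I : Finset ℕ} (h : I.Nonempty) : minF I ∈ I := by
  exact_mod_cast Nat.sInf_mem (s := (I : Set ℕ)) (by exact_mod_cast h)

lemma minF_le {I : Finset ℕ} {p : ℕ} (h : p ∈ I) : minF I ≤ p :=
  Nat.sInf_le (by exact_mod_cast h)

@[simp]
lemma minF_singleton (p : ℕ) : minF {p} = p :=
  Finset.mem_singleton.1 (minF_mem (Finset.singleton_nonempty p))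

lemma FinLt.mono {I J I' J' : Finset ℕ} (h : FinLt I J) (hI : I' ⊆ I) (hJ : J' ⊆ J) :
    FinLt I' J' :=
  fun a ha b hb => h a (hI ha) b (hJ hb)

lemma FinLt.minF_lt {I J : Finset ℕ} (h : FinLt I J) (hI : I.Nonempty) (hJ : J.Nonempty) :
    minF I < minF J :=
  h _ (minF_mem hI) _ (minF_mem hJ)

lemma Admissible.of_subset {n k : ℕ} {I J : ℕ → Finset ℕ} (hI : Admissible n k I)
    (hJI : ∀ i < k, J i ⊆ I i) (hJ : ∀ i < k, (J i).Nonempty) : Admissible n k J := by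
  obtain ⟨hIne, hIord, hIsch⟩ := hI
  refine ⟨hJ, fun i j hij hj => (hIord i j hij hj).mono (hJI i (hij.trans hj)) (hJI j hj), ?_⟩
  refine Schreier.image_mem hIsch (g := fun i => minF (I i))
    (fun i hi => Finset.mem_image_of_mem _ hi) (fun i hi i' hi' hlt => ?_) fun i hi =>
      minF_le (hJI i (Finset.mem_range.1 hi) (minF_mem (hJ i (Finset.mem_range.1 hi))))
  rw [Finset.mem_range] at hi hi'
  rcases lt_trichotomy i i' with h | rfl | h
  · exact (hIord i i' h hi').minF_lt (hIne i hi) (hIne i' hi')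
  · exact absurd hlt (lt_irrefl _)
  · exact absurd ((hIord i' i h hi).mono (hJI i' hi') (hJI i hi) _ (minF_mem (hJ i' hi')) _
      (minF_mem (hJ i hi))) hlt.not_gt

lemma Admissible.famAdmissible {n k : ℕ} {I : ℕ → Finset ℕ} (hI : Admissible n k I) :
    FamAdmissible n ((Finset.range k).image I) := by
  obtain ⟨hIne, hIord, hIsch⟩ := hI
  refine ⟨?_, ?_, by rwa [Finset.image_image]⟩
  · simp only [Finset.mem_image, Finset.mem_range]
    rintro _ ⟨i, hi, rfl⟩
    exact hIne i hi
  · simp only [Finset.mem_image, Finset.mem_range]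
    rintro _ ⟨i, hi, rfl⟩ _ ⟨j, hj, rfl⟩ hne
    rcases lt_trichotomy i j with h | rfl | h
    · exact Or.inl (hIord i j h hj)
    · exact absurd rfl hne
    · exact Or.inr (hIord j i h hi)

/-- The minima can only move to the right. -/
lemma FamAdmissible.inter {n : ℕ} {𝓕 : Finset (Finset ℕ)} (h : FamAdmissible n 𝓕)
    (E : Finset ℕ) :
    FamAdmissible n ((𝓕.filter fun I => (I ∩ E).Nonempty).image (· ∩ E)) := by
  obtain ⟨hne, hord, hsch⟩ := h
  simp only [FamAdmissible, Finset.mem_image, Finset.mem_filter]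
  refine ⟨?_, ?_, ?_⟩
  · rintro _ ⟨I, ⟨-, hI⟩, rfl⟩
    exact hI
  · rintro _ ⟨I, ⟨hI, -⟩, rfl⟩ _ ⟨J, ⟨hJ, -⟩, rfl⟩ hIJ
    rcases hord I hI J hJ (fun h => hIJ (h ▸ rfl)) with h | h
    · exact Or.inl (h.mono Finset.inter_subset_left Finset.inter_subset_left)
    · exact Or.inr (h.mono Finset.inter_subset_left Finset.inter_subset_left)
  · rw [Finset.image_image]
    refine Schreier.image_mem hsch (g := minF) (fun I hI => Finset.mem_image_of_mem _
      (Finset.mem_filter.1 hI).1) (fun I hI J hJ hlt => ?_) (fun I hI => minF_le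
        (Finset.inter_subset_left (minF_mem (Finset.mem_filter.1 hI).2)))
    rw [Finset.mem_filter] at hI hJ
    rcases hord I hI.1 J hJ.1 (fun h => by subst h; exact lt_irrefl _ hlt) with h | h
    · exact h.minF_lt (hne I hI.1) (hne J hJ.1)
    · exact absurd ((h.mono Finset.inter_subset_left Finset.inter_subset_left).minF_lt hJ.2 hI.2)
        hlt.not_gt

lemma IsBlockSeq.finLt {u : ℕ → ℕ →₀ ℝ} (hu : IsBlockSeq u) {i j : ℕ} (h : i < j) :
    FinLt (u i).support (u j).support := by
  induction j, h using Nat.le_induction with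
  | base => exact hu.2 i
  | succ j hij ih =>
    obtain ⟨s, hs⟩ := Finsupp.support_nonempty_iff.2 (hu.1 j)
    exact fun a ha b hb => (ih a ha s hs).trans (hu.2 j s hs b hb)

lemma IsBlockSeq.minSupp_lt {u : ℕ → ℕ →₀ ℝ} (hu : IsBlockSeq u) {i j : ℕ} (h : i < j) :
    minSupp (u i) < minSupp (u j) :=
  (hu.finLt h).minF_lt (Finsupp.support_nonempty_iff.2 (hu.1 i))
    (Finsupp.support_nonempty_iff.2 (hu.1 j))

lemma IsBlockSeq.le_minSupp {u : ℕ → ℕ →₀ ℝ} (hu : IsBlockSeq u) (i : ℕ) : i ≤ minSupp (u i) :=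
  StrictMono.id_le (fun _ _ h => hu.minSupp_lt h) i

/-! ### Appropriate trees -/

lemma mpair_eq_sum_support_right (mu x : ℕ →₀ ℝ) :
    mpair mu x = ∑ i ∈ x.support, mu i * x i := by
  have h₁ : mpair mu x = ∑ i ∈ mu.support ∪ x.support, mu i * x i :=
    Finset.sum_subset Finset.subset_union_left fun i _ hi => by
      simp [Finsupp.notMem_support_iff.1 hi]
  rw [h₁]
  exact (Finset.sum_subset Finset.subset_union_right fun i _ hi => by
    rw [Finsupp.notMem_support_iff.1 hi, mul_zero]).symm

lemma mpair_finsetSum_left {ι : Type*} (s : Finset ι) (mu : ι → ℕ →₀ ℝ) (x : ℕ →₀ ℝ) :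
    mpair (∑ a ∈ s, mu a) x = ∑ a ∈ s, mpair (mu a) x :=
  (Finsupp.sum_finsetSum_index (fun _ => zero_mul _) fun _ _ _ => add_mul _ _ _).symm

lemma mpair_smul_single_left (c : ℝ) (p : ℕ) (x : ℕ →₀ ℝ) :
    mpair (c • Finsupp.single p 1) x = c * x p := by
  rw [Finsupp.smul_single, smul_eq_mul, mul_one, mpair, Finsupp.sum_single_index (zero_mul _)]

lemma mpair_smul_left (c : ℝ) (mu x : ℕ →₀ ℝ) : mpair (c • mu) x = c * mpair mu x := by
  rw [mpair, Finsupp.sum_smul_index fun _ => zero_mul _, mpair, Finsupp.mul_sum]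
  exact Finsupp.sum_congr fun _ _ => mul_assoc _ _ _

lemma mpair_neg_left (mu x : ℕ →₀ ℝ) : mpair (-mu) x = -mpair mu x := by
  simp only [mpair]
  rw [Finsupp.sum_neg_index fun _ => zero_mul _]
  simp [Finsupp.sum]

lemma mpair_smul_right (mu : ℕ →₀ ℝ) (a : ℝ) (x : ℕ →₀ ℝ) :
    mpair mu (a • x) = a * mpair mu x := by
  simp only [mpair, Finsupp.smul_apply, smul_eq_mul, Finsupp.mul_sum]
  exact Finsupp.sum_congr fun _ _ => by ring

section Nodes

variable (l α : GNode) (r t : ℕ × Finset ℕ × ℤ)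

@[simp] lemma mEnt_append_singleton : mEnt (l ++ [t]) = t.1 := by simp [mEnt]
@[simp] lemma iEnt_append_singleton : iEnt (l ++ [t]) = t.2.1 := by simp [iEnt]
@[simp] lemma sEnt_append_singleton : sEnt (l ++ [t]) = t.2.2 := by simp [sEnt]
@[simp] lemma mWeight_append_singleton : mWeight (l ++ [t]) = (l.map (·.1)).prod := by
  simp [mWeight]
@[simp] lemma epsProd_append_singleton : epsProd (l ++ [t]) = (l.map (·.2.2)).prod := by
  simp [epsProd]

@[simp] lemma mEnt_singleton : mEnt [t] = t.1 := mEnt_append_singleton [] t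
@[simp] lemma iEnt_singleton : iEnt [t] = t.2.1 := iEnt_append_singleton [] t
@[simp] lemma sEnt_singleton : sEnt [t] = t.2.2 := sEnt_append_singleton [] t
@[simp] lemma mWeight_singleton : mWeight [t] = 1 := mWeight_append_singleton [] t
@[simp] lemma epsProd_singleton : epsProd [t] = 1 := epsProd_append_singleton [] t

variable {α}

lemma eq_dropLast_append (h : α ≠ []) : α = α.dropLast ++ [(mEnt α, iEnt α, sEnt α)] := by
  conv_lhs => rw [← List.dropLast_append_getLast h]
  simp [mEnt, iEnt, sEnt, List.getLastD_eq_getLast?, List.getLast?_eq_some_getLast h]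

lemma mWeight_append_of_ne_nil (h : α ≠ []) : mWeight (α ++ [t]) = mWeight α * mEnt α := by
  conv_lhs => rw [eq_dropLast_append h]
  simp [mWeight]

lemma mEnt_cons (h : α ≠ []) : mEnt (r :: α) = mEnt α := by
  conv_lhs => rw [eq_dropLast_append h, ← List.cons_append, mEnt_append_singleton]
lemma iEnt_cons (h : α ≠ []) : iEnt (r :: α) = iEnt α := by
  conv_lhs => rw [eq_dropLast_append h, ← List.cons_append, iEnt_append_singleton]
lemma sEnt_cons (h : α ≠ []) : sEnt (r :: α) = sEnt α := by
  conv_lhs => rw [eq_dropLast_append h, ← List.cons_append, sEnt_append_singleton]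
lemma pOf_cons (h : α ≠ []) : pOf (r :: α) = pOf α := by rw [pOf, pOf, iEnt_cons r h]
lemma mWeight_cons (h : α ≠ []) : mWeight (r :: α) = r.1 * mWeight α := by
  conv_lhs => rw [eq_dropLast_append h, ← List.cons_append, mWeight_append_singleton]
  rfl
lemma epsProd_cons (h : α ≠ []) : epsProd (r :: α) = r.2.2 * epsProd α := by
  conv_lhs => rw [eq_dropLast_append h, ← List.cons_append, epsProd_append_singleton]
  rfl

end Nodes

def nodeCoeff (α : GNode) : ℝ := (mWeight α : ℝ)⁻¹ * ((epsProd α * sEnt α : ℤ) : ℝ)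

lemma nodeCoeff_cons (r : ℕ × Finset ℕ × ℤ) {α : GNode} (hα : α ≠ []) :
    nodeCoeff (r :: α) = (r.1 : ℝ)⁻¹ * r.2.2 * nodeCoeff α := by
  rw [nodeCoeff, nodeCoeff, mWeight_cons r hα, epsProd_cons r hα, sEnt_cons r hα]
  push_cast
  rw [mul_inv]
  ring

lemma treeMeasure_eq (T : Finset GNode) :
    treeMeasure T = ∑ α ∈ T.filter (IsTerminalIn T ·), nodeCoeff α • Finsupp.single (pOf α) 1 :=
  rfl

lemma mpair_treeMeasure (T : Finset GNode) (x : ℕ →₀ ℝ) :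
    mpair (treeMeasure T) x = ∑ α ∈ T.filter (IsTerminalIn T ·), nodeCoeff α * x (pOf α) := by
  simp only [treeMeasure_eq, mpair_finsetSum_left, mpair_smul_single_left]

lemma mem_childrenIn {T : Finset GNode} {α β : GNode} :
    β ∈ childrenIn T α ↔ β ∈ T ∧ β.length = α.length + 1 ∧ α <+: β := by
  simp [childrenIn]

lemma eq_append_of_mem_childrenIn {T : Finset GNode} {α β : GNode} (h : β ∈ childrenIn T α) :
    ∃ t, β = α ++ [t] := by
  obtain ⟨-, hlen, r, rfl⟩ := mem_childrenIn.1 h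
  obtain ⟨t, rfl⟩ := List.length_eq_one_iff.1 (by simpa using hlen)
  exact ⟨t, rfl⟩

lemma not_isTerminalIn_of_mem_childrenIn {T : Finset GNode} {α β : GNode}
    (h : β ∈ childrenIn T α) : ¬ IsTerminalIn T α := fun ht => by
  obtain ⟨hβ, hlen, hpre⟩ := mem_childrenIn.1 h
  have := congrArg List.length (ht β hβ hpre)
  omega

section Relabel

/-! A relabelling of the nodes of `S` that reflects the prefix order transports the tree
structure of `S` to its image. -/

variable {S : Finset GNode} {φ : GNode → GNode}
  (hφ : ∀ α ∈ S, ∀ β ∈ S, φ α <+: φ β ↔ α <+: β)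
include hφ

lemma injOn_of_prefix_iff : Set.InjOn φ S := fun α hα β hβ h => by
  have h₁ := (hφ α hα β hβ).1 (h ▸ List.prefix_refl _)
  have h₂ := (hφ β hβ α hα).1 (h ▸ List.prefix_refl _)
  exact h₁.eq_of_length (le_antisymm h₁.length_le h₂.length_le)

lemma isTerminalIn_image_iff {α : GNode} (hα : α ∈ S) :
    IsTerminalIn (S.image φ) (φ α) ↔ IsTerminalIn S α := by
  simp only [IsTerminalIn, Finset.forall_mem_image]
  refine forall₂_congr fun β hβ => ?_
  rw [hφ α hα β hβ, (injOn_of_prefix_iff hφ).eq_iff hβ hα]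

lemma childrenIn_image {c : ℕ} (hlen : ∀ α ∈ S, (φ α).length = α.length + c) {α : GNode}
    (hα : α ∈ S) : childrenIn (S.image φ) (φ α) = (childrenIn S α).image φ := by
  ext γ
  simp only [mem_childrenIn, Finset.mem_image]
  constructor
  · rintro ⟨⟨β, hβ, rfl⟩, hl, hpre⟩
    exact ⟨β, ⟨hβ, by rw [hlen β hβ, hlen α hα] at hl; omega, (hφ α hα β hβ).1 hpre⟩, rfl⟩
  · rintro ⟨β, ⟨hβ, hl, hpre⟩, rfl⟩
    exact ⟨⟨β, hβ, rfl⟩, by rw [hlen β hβ, hlen α hα, hl]; omega, (hφ α hα β hβ).2 hpre⟩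

lemma filter_isTerminalIn_image :
    (S.image φ).filter (IsTerminalIn (S.image φ) ·) = (S.filter (IsTerminalIn S ·)).image φ := by
  ext γ
  simp only [Finset.mem_filter, Finset.mem_image]
  constructor
  · rintro ⟨⟨α, hα, rfl⟩, ht⟩
    exact ⟨α, ⟨hα, (isTerminalIn_image_iff hφ hα).1 ht⟩, rfl⟩
  · rintro ⟨α, ⟨hα, ht⟩, rfl⟩
    exact ⟨⟨α, hα, rfl⟩, (isTerminalIn_image_iff hφ hα).2 ht⟩

lemma treeMeasure_image : treeMeasure (S.image φ) =
    ∑ α ∈ S.filter (IsTerminalIn S ·), nodeCoeff (φ α) • Finsupp.single (pOf (φ α)) 1 := by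
  rw [treeMeasure_eq, filter_isTerminalIn_image hφ, Finset.sum_image
    ((injOn_of_prefix_iff hφ).mono (Finset.coe_subset.2 (Finset.filter_subset _ _)))]

end Relabel

lemma abs_list_prod_of_sign (l : List ℤ) (hl : ∀ s ∈ l, s = 1 ∨ s = -1) : |l.prod| = 1 := by
  change absHom l.prod = 1
  rw [map_list_prod]
  refine List.prod_eq_one fun s hs => ?_
  obtain ⟨s, hs', rfl⟩ := List.mem_map.1 hs
  rcases hl s hs' with rfl | rfl <;> rfl

variable {m n l : ℕ → ℕ}

section Tree

variable {T : Finset GNode}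

namespace IsAppropriate

variable (hT : IsAppropriate m n T)
include hT

lemma ne_nil {α : GNode} (hα : α ∈ T) : α ≠ [] := hT.2.1 α hα

lemma take_mem {α : GNode} (hα : α ∈ T) {k : ℕ} (hk : 0 < k) : α.take k ∈ T := by
  rcases le_or_gt k α.length with h | h
  · exact hT.2.2.1 α hα k hk h
  · rwa [List.take_of_length_le h.le]


lemma eq_of_length_eq_one {α β : GNode} (hα : α ∈ T) (hβ : β ∈ T) (h₁ : α.length = 1)
    (h₂ : β.length = 1) : α = β :=
  hT.2.2.2.1 α hα β hβ h₁ h₂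

lemma entry_spec {α : GNode} (hα : α ∈ T) {t : ℕ × Finset ℕ × ℤ} (ht : t ∈ α) :
    (t.2.2 = 1 ∨ t.2.2 = -1) ∧ t.2.1.Nonempty :=
  hT.2.2.2.2.1 α hα t ht

lemma terminal_spec {α : GNode} (hα : α ∈ T) (ht : IsTerminalIn T α) :
    mEnt α = 0 ∧ ∃ p, iEnt α = {p} :=
  hT.2.2.2.2.2.1 α hα ht

lemma nonterminal_spec {α : GNode} (hα : α ∈ T) (ht : ¬ IsTerminalIn T α) :
    ∃ j, mEnt α = m j ∧ FamAdmissible (n j) ((childrenIn T α).image iEnt) ∧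
      iEnt α = (childrenIn T α).sup iEnt :=
  hT.2.2.2.2.2.2 α hα ht

lemma last_mem {α : GNode} (hα : α ∈ T) : (mEnt α, iEnt α, sEnt α) ∈ α := by
  rw [eq_dropLast_append (hT.ne_nil hα)]
  simp

lemma iEnt_nonempty {α : GNode} (hα : α ∈ T) : (iEnt α).Nonempty :=
  (hT.entry_spec hα (hT.last_mem hα)).2

lemma iEnt_of_isTerminalIn {α : GNode} (hα : α ∈ T) (ht : IsTerminalIn T α) :
    iEnt α = {pOf α} := by
  obtain ⟨-, p, hp⟩ := hT.terminal_spec hα ht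
  rw [pOf, hp, minF_singleton]

lemma take_succ_mem_childrenIn {α β : GNode} (hβ : β ∈ T) (hpre : α <+: β)
    (hne : α ≠ β) : β.take (α.length + 1) ∈ childrenIn T α := by
  have hlt : α.length < β.length :=
    lt_of_le_of_ne hpre.length_le fun h => hne (hpre.eq_of_length h)
  refine mem_childrenIn.2 ⟨hT.take_mem hβ (Nat.succ_pos _), by simp; omega, ?_⟩
  exact List.prefix_of_prefix_length_le hpre (List.take_prefix _ _) (by simp; omega)

lemma exists_mem_childrenIn {α : GNode} (ht : ¬ IsTerminalIn T α) :
    ∃ c, c ∈ childrenIn T α := by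
  simp only [IsTerminalIn, not_forall] at ht
  obtain ⟨β, hβ, hpre, hne⟩ := ht
  exact ⟨_, hT.take_succ_mem_childrenIn hβ hpre (Ne.symm hne)⟩

lemma iEnt_subset_of_mem_childrenIn {α c : GNode} (hα : α ∈ T) (hc : c ∈ childrenIn T α) :
    iEnt c ⊆ iEnt α := by
  obtain ⟨j, -, -, hsup⟩ := hT.nonterminal_spec hα (not_isTerminalIn_of_mem_childrenIn hc)
  exact hsup ▸ Finset.le_sup (f := iEnt) hc

lemma iEnt_subset_of_prefix {α β : GNode} (hα : α ∈ T) (hβ : β ∈ T) (hpre : α <+: β) :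
    iEnt β ⊆ iEnt α := by
  induction hd : β.length - α.length generalizing α with
  | zero => rw [hpre.eq_of_length (by have := hpre.length_le; omega)]
  | succ d ih =>
    have hne : α ≠ β := by rintro rfl; simp at hd
    have hc := hT.take_succ_mem_childrenIn hβ hpre hne
    refine (ih (mem_childrenIn.1 hc).1 (List.take_prefix _ _) ?_).trans
      (hT.iEnt_subset_of_mem_childrenIn hα hc)
    rw [(mem_childrenIn.1 hc).2.1]
    omega

/-- Distinct intervals of an admissible family are disjoint. -/
lemma eq_of_mem_childrenIn {α c c' : GNode} (hα : α ∈ T) (hc : c ∈ childrenIn T α)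
    (hc' : c' ∈ childrenIn T α) {p : ℕ} (hp : p ∈ iEnt c) (hp' : p ∈ iEnt c')
    (hm : mEnt c = mEnt c') (hs : sEnt c = sEnt c') : c = c' := by
  obtain ⟨j, -, hadm, -⟩ := hT.nonterminal_spec hα (not_isTerminalIn_of_mem_childrenIn hc)
  have hI : iEnt c = iEnt c' := by
    by_contra hne
    rcases hadm.2.1 _ (Finset.mem_image_of_mem _ hc) _ (Finset.mem_image_of_mem _ hc') hne with
      h | h <;> exact lt_irrefl p (h _ ‹_› _ ‹_›)
  obtain ⟨t, rfl⟩ := eq_append_of_mem_childrenIn hc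
  obtain ⟨t', rfl⟩ := eq_append_of_mem_childrenIn hc'
  simp only [mEnt_append_singleton, iEnt_append_singleton, sEnt_append_singleton] at hm hI hs
  rw [Prod.ext hm (Prod.ext hI hs)]

lemma rootOf_spec : rootOf T ∈ T ∧ (rootOf T).length = 1 ∧ ∀ α ∈ T, α.take 1 = rootOf T := by
  have hlen : ∀ α ∈ T, (α.take 1).length = 1 := fun α hα => by
    simp only [List.length_take]; exact min_eq_left (List.length_pos_iff.2 (hT.ne_nil hα))
  have hne : (T.filter fun α => α.length = 1).Nonempty := by
    obtain ⟨α, hα⟩ := hT.1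
    exact ⟨α.take 1, Finset.mem_filter.2 ⟨hT.take_mem hα one_pos, hlen α hα⟩⟩
  obtain ⟨hmem, hroot⟩ := Finset.mem_filter.1 hne.choose_spec
  rw [rootOf, dif_pos hne]
  exact ⟨hmem, hroot, fun α hα =>
    hT.eq_of_length_eq_one (hT.take_mem hα one_pos) hmem (hlen α hα) hroot⟩

lemma rootOf_prefix {α : GNode} (hα : α ∈ T) : rootOf T <+: α :=
  hT.rootOf_spec.2.2 α hα ▸ List.take_prefix 1 α

lemma abs_nodeCoeff {α : GNode} (hα : α ∈ T) : |nodeCoeff α| = (mWeight α : ℝ)⁻¹ := by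
  have hε : |epsProd α| = 1 := abs_list_prod_of_sign _ fun s hs => by
    obtain ⟨t, ht, rfl⟩ := List.mem_map.1 hs
    exact (hT.entry_spec hα (List.dropLast_subset _ ht)).1
  have hs : |sEnt α| = 1 := by
    rcases (hT.entry_spec hα (hT.last_mem hα)).1 with h | h <;> simp only at h <;> simp [h]
  rw [nodeCoeff, abs_mul, abs_inv, Nat.abs_cast, ← Int.cast_abs, abs_mul, hε, hs]
  simp

end IsAppropriate

/-! ### The norming functionals are bounded -/

namespace MLParams

variable (hm : MLParams m l)
include hm

lemma seven_pow_le (i : ℕ) : 7 ^ (i + 1) ≤ m i := by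
  induction i with
  | zero => rw [zero_add, pow_one]; exact hm.m_six
  | succ i ih =>
    calc 7 ^ (i + 1 + 1) ≤ (7 ^ (i + 1)) ^ 2 := by
          rw [← pow_mul]; exact Nat.pow_le_pow_right (by norm_num) (by nlinarith)
      _ ≤ m i ^ 2 := Nat.pow_le_pow_left ih 2
      _ ≤ m (i + 1) := (hm.m_sq i).le

lemma seven_le (i : ℕ) : 7 ≤ m i :=
  (Nat.le_self_pow (Nat.succ_ne_zero i) 7).trans (hm.seven_pow_le i)

lemma sum_inv_le (s : Finset ℕ) : ∑ i ∈ s, (m i : ℝ)⁻¹ ≤ 1 / 6 := by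
  have hgeo : HasSum (fun i : ℕ => (7 : ℝ)⁻¹ ^ (i + 1)) (1 / 6) := by
    have := (hasSum_geometric_of_lt_one (r := (7 : ℝ)⁻¹) (by norm_num) (by norm_num)).mul_left
      (7 : ℝ)⁻¹
    rw [show (7 : ℝ)⁻¹ * (1 - 7⁻¹)⁻¹ = 1 / 6 by norm_num] at this
    exact this.congr_fun fun i => by rw [pow_succ']
  refine (Finset.sum_le_sum fun i _ => ?_).trans
    (sum_le_hasSum s (fun i _ => by positivity) hgeo)
  rw [inv_pow]
  exact inv_anti₀ (by positivity) (by exact_mod_cast hm.seven_pow_le i)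

lemma sum_inv_values_le {A : Finset ℕ} (hA : ∀ e ∈ A, ∃ j, m j = e) :
    ∑ e ∈ A, (e : ℝ)⁻¹ ≤ 1 / 6 := by
  choose! g hg using hA
  calc ∑ e ∈ A, (e : ℝ)⁻¹ = ∑ j ∈ A.image g, (m j : ℝ)⁻¹ := by
        rw [Finset.sum_image fun e he e' he' h => by rw [← hg e he, ← hg e' he', h]]
        exact Finset.sum_congr rfl fun e he => by rw [hg e he]
    _ ≤ 1 / 6 := hm.sum_inv_le _

end MLParams

/-- The invariant of the mass bound `massBelow_le`: below a node `α` with `M`-entry `e` the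
terminal nodes at a fixed point carry mass at most `entryBound e / m(α)`. -/
def entryBound (e : ℕ) : ℝ := if e = 0 then 1 else 3 / e

lemma entryBound_nonneg (e : ℕ) : 0 ≤ entryBound e := by
  unfold entryBound; split_ifs <;> positivity

lemma entryBound_le_one {e : ℕ} (he : e = 0 ∨ 3 ≤ e) : entryBound e ≤ 1 := by
  unfold entryBound
  split_ifs with h
  · exact le_rfl
  · rw [div_le_one (by positivity)]
    exact_mod_cast he.resolve_left h

lemma MLParams.sum_entryBound_le (hm : MLParams m l) {A : Finset ℕ}
    (hA : ∀ e ∈ A, e = 0 ∨ ∃ j, m j = e) : ∑ e ∈ A, entryBound e ≤ 3 / 2 := by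
  rw [← Finset.sum_filter_add_sum_filter_not A (· = 0)]
  have h₀ : ∑ e ∈ A.filter (· = 0), entryBound e ≤ 1 :=
    calc ∑ e ∈ A.filter (· = 0), entryBound e ≤ ∑ e ∈ {0}, entryBound e :=
          Finset.sum_le_sum_of_subset_of_nonneg (fun e he => by simp_all)
            fun e _ _ => entryBound_nonneg e
      _ = 1 := by simp [entryBound]
  have h₁ : ∑ e ∈ A.filter (· ≠ 0), entryBound e ≤ 3 * (1 / 6) := by
    have hval : ∀ e ∈ A.filter (· ≠ 0), entryBound e = 3 * (e : ℝ)⁻¹ := fun e he => by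
      simp [entryBound, (Finset.mem_filter.1 he).2, div_eq_mul_inv]
    rw [Finset.sum_congr rfl hval, ← Finset.mul_sum]
    gcongr
    exact hm.sum_inv_values_le fun e he =>
      (hA e (Finset.mem_filter.1 he).1).resolve_left (Finset.mem_filter.1 he).2
  linarith

def massBelow (T : Finset GNode) (α : GNode) (p : ℕ) : ℝ :=
  ∑ δ ∈ T.filter (fun δ => IsTerminalIn T δ ∧ α <+: δ ∧ pOf δ = p), (mWeight δ : ℝ)⁻¹

namespace IsAppropriate

variable (hT : IsAppropriate m n T)
include hT

lemma mEnt_eq_zero_or_exists {α : GNode} (hα : α ∈ T) : mEnt α = 0 ∨ ∃ j, m j = mEnt α := by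
  by_cases ht : IsTerminalIn T α
  · exact Or.inl (hT.terminal_spec hα ht).1
  · obtain ⟨j, hj, -⟩ := hT.nonterminal_spec hα ht
    exact Or.inr ⟨j, hj.symm⟩

lemma massBelow_le_of_isTerminalIn {α : GNode} (hα : α ∈ T) (ht : IsTerminalIn T α) (p : ℕ) :
    massBelow T α p ≤ (mWeight α : ℝ)⁻¹ * entryBound (mEnt α) := by
  rw [(hT.terminal_spec hα ht).1, entryBound, if_pos rfl, mul_one]
  calc massBelow T α p ≤ ∑ δ ∈ {α}, (mWeight δ : ℝ)⁻¹ :=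
        Finset.sum_le_sum_of_subset_of_nonneg (fun δ hδ => by
          obtain ⟨hδ, -, hpre, -⟩ := Finset.mem_filter.1 hδ
          exact Finset.mem_singleton.2 (ht δ hδ hpre)) fun _ _ _ => by positivity
    _ = (mWeight α : ℝ)⁻¹ := Finset.sum_singleton _ _

lemma massBelow_eq_zero {α : GNode} (hα : α ∈ T) {p : ℕ} (hp : p ∉ iEnt α) :
    massBelow T α p = 0 := by
  refine Finset.sum_eq_zero fun δ hδ => absurd ?_ hp
  obtain ⟨hδT, ht, hpre, rfl⟩ := Finset.mem_filter.1 hδ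
  exact hT.iEnt_subset_of_prefix hα hδT hpre (by simp [hT.iEnt_of_isTerminalIn hδT ht])

lemma massBelow_eq_sum_childrenIn {α : GNode} (ht : ¬ IsTerminalIn T α) (p : ℕ) :
    massBelow T α p = ∑ c ∈ childrenIn T α, massBelow T c p := by
  unfold massBelow
  rw [← Finset.sum_biUnion fun c hc c' hc' hne => Finset.disjoint_left.2 fun δ hδ hδ' => hne ?_]
  · refine Finset.sum_congr (Finset.ext fun δ => ?_) fun _ _ => rfl
    simp only [Finset.mem_filter, Finset.mem_biUnion]
    constructor
    · rintro ⟨hδ, hδt, hpre, hp⟩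
      have hne : α ≠ δ := by rintro rfl; exact ht hδt
      exact ⟨_, hT.take_succ_mem_childrenIn hδ hpre hne, hδ, hδt, List.take_prefix _ _, hp⟩
    · rintro ⟨c, hc, hδ, hδt, hpre, hp⟩
      exact ⟨hδ, hδt, (mem_childrenIn.1 hc).2.2.trans hpre, hp⟩
  · have h₁ := (Finset.mem_filter.1 hδ).2.2.1
    have h₂ := (Finset.mem_filter.1 hδ').2.2.1
    have hlen : c.length = c'.length := by
      rw [(mem_childrenIn.1 hc).2.1, (mem_childrenIn.1 hc').2.1]
    rw [List.prefix_iff_eq_take.1 h₁, List.prefix_iff_eq_take.1 h₂, hlen]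

lemma sum_entryBound_childrenIn_le (hm : MLParams m l) {α : GNode} (hα : α ∈ T) (p : ℕ) :
    ∑ c ∈ (childrenIn T α).filter (p ∈ iEnt ·), entryBound (mEnt c) ≤ 3 := by
  set C := (childrenIn T α).filter (p ∈ iEnt ·)
  have hC : ∀ c ∈ C, c ∈ childrenIn T α ∧ p ∈ iEnt c := fun c hc => Finset.mem_filter.1 hc
  have hinj : Set.InjOn (fun c => (mEnt c, sEnt c)) C := fun c hc c' hc' h =>
    hT.eq_of_mem_childrenIn hα (hC c hc).1 (hC c' hc').1 (hC c hc).2 (hC c' hc').2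
      (Prod.ext_iff.1 h).1 (Prod.ext_iff.1 h).2
  have hsub : C.image (fun c => (mEnt c, sEnt c)) ⊆ C.image mEnt ×ˢ {1, -1} := by
    simp only [Finset.image_subset_iff, Finset.mem_product, Finset.mem_insert,
      Finset.mem_singleton]
    intro c hc
    exact ⟨Finset.mem_image_of_mem _ hc,
      (hT.entry_spec (mem_childrenIn.1 (hC c hc).1).1
        (hT.last_mem (mem_childrenIn.1 (hC c hc).1).1)).1⟩
  calc ∑ c ∈ C, entryBound (mEnt c)
      = ∑ q ∈ C.image (fun c => (mEnt c, sEnt c)), entryBound q.1 :=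
        (Finset.sum_image (f := fun q => entryBound q.1) hinj).symm
    _ ≤ ∑ q ∈ C.image mEnt ×ˢ {1, -1}, entryBound q.1 :=
        Finset.sum_le_sum_of_subset_of_nonneg hsub fun q _ _ => entryBound_nonneg q.1
    _ = 2 * ∑ e ∈ C.image mEnt, entryBound e := by
        rw [Finset.sum_product, Finset.mul_sum]
        simp [two_mul]
    _ ≤ 2 * (3 / 2) := by
        gcongr
        refine hm.sum_entryBound_le fun e he => ?_
        obtain ⟨c, hc, rfl⟩ := Finset.mem_image.1 he
        exact hT.mEnt_eq_zero_or_exists (mem_childrenIn.1 (hC c hc).1).1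
    _ = 3 := by norm_num

lemma massBelow_le (hm : MLParams m l) {α : GNode} (hα : α ∈ T) (p : ℕ) :
    massBelow T α p ≤ (mWeight α : ℝ)⁻¹ * entryBound (mEnt α) := by
  induction hd : T.sup List.length - α.length generalizing α with
  | zero =>
    refine hT.massBelow_le_of_isTerminalIn hα (by_contra fun ht => ?_) p
    obtain ⟨c, hc⟩ := hT.exists_mem_childrenIn ht
    have := Finset.le_sup (f := List.length) (mem_childrenIn.1 hc).1
    have := (mem_childrenIn.1 hc).2.1
    omega
  | succ d ih =>
    by_cases ht : IsTerminalIn T α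
    · exact hT.massBelow_le_of_isTerminalIn hα ht p
    obtain ⟨j, hj, -⟩ := hT.nonterminal_spec hα ht
    have hmα : mEnt α ≠ 0 := by have := hm.seven_le j; omega
    set C := (childrenIn T α).filter (p ∈ iEnt ·)
    have hchild : ∀ c ∈ C, c ∈ T ∧ mWeight c = mWeight α * mEnt α ∧
        T.sup List.length - c.length = d := fun c hc => by
      obtain ⟨hc, -⟩ := Finset.mem_filter.1 hc
      obtain ⟨t, rfl⟩ := eq_append_of_mem_childrenIn hc
      refine ⟨(mem_childrenIn.1 hc).1, mWeight_append_of_ne_nil t (hT.ne_nil hα), ?_⟩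
      have := (mem_childrenIn.1 hc).2.1
      omega
    calc massBelow T α p = ∑ c ∈ C, massBelow T c p := by
          rw [hT.massBelow_eq_sum_childrenIn ht, Finset.sum_filter_of_ne fun c hc hne => ?_]
          by_contra hp
          exact hne (hT.massBelow_eq_zero (mem_childrenIn.1 hc).1 hp)
      _ ≤ ∑ c ∈ C, (mWeight c : ℝ)⁻¹ * entryBound (mEnt c) :=
          Finset.sum_le_sum fun c hc => ih (hchild c hc).1 (hchild c hc).2.2
      _ = (mWeight α : ℝ)⁻¹ * (mEnt α : ℝ)⁻¹ * ∑ c ∈ C, entryBound (mEnt c) := by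
          rw [Finset.mul_sum]
          refine Finset.sum_congr rfl fun c hc => ?_
          rw [(hchild c hc).2.1, Nat.cast_mul, mul_inv]
      _ ≤ (mWeight α : ℝ)⁻¹ * (mEnt α : ℝ)⁻¹ * 3 := by
          gcongr
          exact hT.sum_entryBound_childrenIn_le hm hα p
      _ = (mWeight α : ℝ)⁻¹ * entryBound (mEnt α) := by
          rw [entryBound, if_neg hmα]
          ring

end IsAppropriate

lemma treeMeasure_apply (T : Finset GNode) (p : ℕ) :
    treeMeasure T p = ∑ α ∈ T.filter (fun α => IsTerminalIn T α ∧ pOf α = p), nodeCoeff α := by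
  rw [treeMeasure_eq, Finsupp.finsetSum_apply, ← Finset.filter_filter,
    Finset.sum_filter (fun α => pOf α = p) nodeCoeff]
  refine Finset.sum_congr rfl fun α _ => ?_
  simp [Finsupp.single_apply]

lemma IsAppropriate.abs_treeMeasure_apply_le (hm : MLParams m l) (hT : IsAppropriate m n T)
    (p : ℕ) : |treeMeasure T p| ≤ 1 := by
  obtain ⟨hroot, hlen, -⟩ := hT.rootOf_spec
  obtain ⟨t, ht⟩ := List.length_eq_one_iff.1 hlen
  have hbound : entryBound (mEnt (rootOf T)) ≤ 1 := entryBound_le_one <|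
    (hT.mEnt_eq_zero_or_exists hroot).imp_right fun ⟨j, hj⟩ => hj ▸ by
      have := hm.seven_le j; omega
  calc |treeMeasure T p|
      ≤ ∑ α ∈ T.filter (fun α => IsTerminalIn T α ∧ pOf α = p), |nodeCoeff α| := by
        rw [treeMeasure_apply]; exact Finset.abs_sum_le_sum_abs _ _
    _ = massBelow T (rootOf T) p := by
        refine Finset.sum_congr (Finset.ext fun α => ?_) fun α hα =>
          hT.abs_nodeCoeff (Finset.mem_filter.1 hα).1
        simp only [Finset.mem_filter]
        exact ⟨fun ⟨hα, ht, hp⟩ => ⟨hα, ht, hT.rootOf_prefix hα, hp⟩,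
          fun ⟨hα, ht, _, hp⟩ => ⟨hα, ht, hp⟩⟩
    _ ≤ (mWeight (rootOf T) : ℝ)⁻¹ * entryBound (mEnt (rootOf T)) := hT.massBelow_le hm hroot p
    _ ≤ 1 := by rw [ht, mWeight_singleton, Nat.cast_one, inv_one, one_mul]; rwa [ht] at hbound

def pointTree (p : ℕ) (s : ℤ) : Finset GNode := {[(0, {p}, s)]}

lemma pointTree_appropriate (p : ℕ) {s : ℤ} (hs : s = 1 ∨ s = -1) :
    IsAppropriate m n (pointTree p s) := by
  have hterm : IsTerminalIn (pointTree p s) [(0, {p}, s)] := fun β hβ _ => Finset.mem_singleton.1 hβ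
  refine ⟨Finset.singleton_nonempty _, ?_, ?_, ?_, ?_, ?_, ?_⟩ <;>
    simp only [pointTree, Finset.mem_singleton] <;> rintro _ rfl
  · simp
  · intro k hk hk'
    obtain rfl : k = 1 := by simp only [List.length_singleton] at hk'; omega
    rfl
  · simp
  · simpa using hs
  · simp
  · exact absurd hterm

lemma treeMeasure_pointTree (p : ℕ) (s : ℤ) :
    treeMeasure (pointTree p s) = (s : ℝ) • Finsupp.single p 1 := by
  have hterm : IsTerminalIn (pointTree p s) [(0, {p}, s)] := fun β hβ _ => Finset.mem_singleton.1 hβ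
  unfold pointTree at hterm ⊢
  rw [treeMeasure_eq, Finset.filter_singleton, if_pos hterm, Finset.sum_singleton]
  simp [nodeCoeff, pOf]

lemma mNorm_set_nonempty (x : ℕ →₀ ℝ) :
    {r : ℝ | ∃ mu ∈ normingSetOf m n, r = mpair mu x}.Nonempty :=
  ⟨_, _, ⟨pointTree 0 1, pointTree_appropriate 0 (Or.inl rfl), rfl⟩, rfl⟩

lemma mNorm_bddAbove (hm : MLParams m l) (x : ℕ →₀ ℝ) :
    BddAbove {r : ℝ | ∃ mu ∈ normingSetOf m n, r = mpair mu x} := by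
  refine ⟨∑ p ∈ x.support, |x p|, ?_⟩
  rintro _ ⟨_, ⟨T, hT, rfl⟩, rfl⟩
  rw [mpair_eq_sum_support_right]
  refine (Finset.abs_sum_le_sum_abs _ _).trans' (le_abs_self _) |>.trans
    (Finset.sum_le_sum fun p _ => ?_)
  rw [abs_mul]
  exact mul_le_of_le_one_left (abs_nonneg _) (hT.abs_treeMeasure_apply_le hm p)

lemma IsAppropriate.mpair_le_mNorm (hm : MLParams m l) (hT : IsAppropriate m n T)
    (x : ℕ →₀ ℝ) : mpair (treeMeasure T) x ≤ mNorm m n x :=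
  le_csSup (mNorm_bddAbove hm x) ⟨_, ⟨T, hT, rfl⟩, rfl⟩

lemma exists_lt_mpair {x : ℕ →₀ ℝ} {r : ℝ} (hr : r < mNorm m n x) :
    ∃ T, IsAppropriate m n T ∧ r < mpair (treeMeasure T) x := by
  obtain ⟨_, ⟨_, ⟨T, hT, rfl⟩, rfl⟩, hlt⟩ := exists_lt_of_lt_csSup (mNorm_set_nonempty x) hr
  exact ⟨T, hT, hlt⟩

lemma abs_apply_le_mNorm (hm : MLParams m l) (x : ℕ →₀ ℝ) (p : ℕ) : |x p| ≤ mNorm m n x := by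
  have key : ∀ s : ℤ, (s = 1 ∨ s = -1) → s * x p ≤ mNorm m n x := fun s hs => by
    have := (pointTree_appropriate (m := m) (n := n) p hs).mpair_le_mNorm hm x
    rwa [treeMeasure_pointTree, mpair_smul_single_left] at this
  rcases abs_cases (x p) with ⟨h, -⟩ | ⟨h, -⟩ <;> rw [h]
  · simpa using key 1 (Or.inl rfl)
  · simpa using key (-1) (Or.inr rfl)

lemma mNorm_nonneg (hm : MLParams m l) (x : ℕ →₀ ℝ) : 0 ≤ mNorm m n x :=
  (abs_nonneg _).trans (abs_apply_le_mNorm hm x 0)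

lemma mNorm_pos (hm : MLParams m l) {x : ℕ →₀ ℝ} (hx : x ≠ 0) : 0 < mNorm m n x := by
  obtain ⟨p, hp⟩ := Finsupp.support_nonempty_iff.2 hx
  exact (abs_pos.2 (Finsupp.mem_support_iff.1 hp)).trans_le (abs_apply_le_mNorm hm x p)

/-! ### Changing the sign of a tree -/

/-- Flipping the sign of the root entry flips the sign `ε(α) ε_α` of every node. -/
def negRoot (α : GNode) : GNode := α.modifyHead fun t => (t.1, t.2.1, -t.2.2)

@[simp]
lemma negRoot_negRoot (α : GNode) : negRoot (negRoot α) = α := by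
  cases α <;> simp [negRoot]

@[simp]
lemma length_negRoot (α : GNode) : (negRoot α).length = α.length := List.length_modifyHead

lemma negRoot_prefix_negRoot_iff {α β : GNode} : negRoot α <+: negRoot β ↔ α <+: β := by
  have key : ∀ α β : GNode, α <+: β → negRoot α <+: negRoot β := fun α β h => by
    obtain ⟨l, rfl⟩ := h
    cases α with
    | nil => exact List.nil_prefix
    | cons a α => exact List.prefix_append _ l
  exact ⟨fun h => by simpa using key _ _ h, key α β⟩

lemma negRoot_cons (t : ℕ × Finset ℕ × ℤ) (α : GNode) :
    negRoot (t :: α) = (t.1, t.2.1, -t.2.2) :: α := rfl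

@[simp]
lemma mEnt_negRoot (α : GNode) : mEnt (negRoot α) = mEnt α := by
  rcases α with _ | ⟨t, _ | ⟨t', α⟩⟩
  · rfl
  · simp [negRoot_cons]
  · rw [negRoot_cons, mEnt_cons _ (List.cons_ne_nil _ _), mEnt_cons _ (List.cons_ne_nil _ _)]

@[simp]
lemma iEnt_negRoot (α : GNode) : iEnt (negRoot α) = iEnt α := by
  rcases α with _ | ⟨t, _ | ⟨t', α⟩⟩
  · rfl
  · simp [negRoot_cons]
  · rw [negRoot_cons, iEnt_cons _ (List.cons_ne_nil _ _), iEnt_cons _ (List.cons_ne_nil _ _)]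

lemma nodeCoeff_negRoot {α : GNode} (hα : α ≠ []) : nodeCoeff (negRoot α) = -nodeCoeff α := by
  rcases α with _ | ⟨t, _ | ⟨t', α⟩⟩
  · exact absurd rfl hα
  · simp [negRoot_cons, nodeCoeff]
  · have h := List.cons_ne_nil t' α
    simp only [negRoot_cons, nodeCoeff, mWeight_cons _ h, epsProd_cons _ h, sEnt_cons _ h]
    push_cast
    ring

def negTree (T : Finset GNode) : Finset GNode := T.image negRoot

lemma negRoot_prefix_iff_on (T : Finset GNode) :
    ∀ α ∈ T, ∀ β ∈ T, negRoot α <+: negRoot β ↔ α <+: β :=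
  fun _ _ _ _ => negRoot_prefix_negRoot_iff

lemma isAppropriate_negTree (hT : IsAppropriate m n T) : IsAppropriate m n (negTree T) := by
  have hφ := negRoot_prefix_iff_on T
  refine ⟨hT.1.image _, ?_, ?_, ?_, ?_, ?_, ?_⟩ <;> simp only [negTree, Finset.mem_image] <;>
    rintro _ ⟨α, hα, rfl⟩
  · simpa [negRoot] using hT.ne_nil hα
  · intro k hk _
    rw [negRoot, List.take_modifyHead]
    exact ⟨_, hT.take_mem hα hk, rfl⟩
  · rintro _ ⟨β, hβ, rfl⟩ h₁ h₂
    rw [hT.eq_of_length_eq_one hα hβ (by simpa using h₁) (by simpa using h₂)]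
  · obtain _ | ⟨a, α'⟩ := α
    · simp [negRoot]
    rintro t (_ | ⟨_, ht⟩)
    · have := hT.entry_spec hα (t := a) List.mem_cons_self
      simp only at this ⊢
      rcases this with ⟨h | h, hI⟩ <;> simp [h, hI]
    · exact hT.entry_spec hα (List.mem_cons_of_mem a ht)
  · intro ht
    simpa using hT.terminal_spec hα ((isTerminalIn_image_iff hφ hα).1 ht)
  · intro ht
    obtain ⟨j, hj, hadm, hsup⟩ := hT.nonterminal_spec hα fun h => ht
      ((isTerminalIn_image_iff hφ hα).2 h)
    have hch := childrenIn_image (c := 0) hφ (fun β _ => length_negRoot β) hα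
    refine ⟨j, by simpa using hj, ?_, ?_⟩
    · rwa [hch, Finset.image_image, show iEnt ∘ negRoot = iEnt from funext iEnt_negRoot]
    · rw [hch, Finset.sup_image, show iEnt ∘ negRoot = iEnt from funext iEnt_negRoot,
        iEnt_negRoot, hsup]

lemma treeMeasure_negTree (hT : IsAppropriate m n T) :
    treeMeasure (negTree T) = -treeMeasure T := by
  rw [negTree, treeMeasure_image (negRoot_prefix_iff_on T), treeMeasure_eq,
    ← Finset.sum_neg_distrib]
  refine Finset.sum_congr rfl fun α hα => ?_
  rw [nodeCoeff_negRoot (hT.ne_nil (Finset.mem_filter.1 hα).1), neg_smul, pOf, pOf, iEnt_negRoot]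

lemma mul_mNorm_le_mNorm_smul (hm : MLParams m l) (a : ℝ) (x : ℕ →₀ ℝ) :
    |a| * mNorm m n x ≤ mNorm m n (a • x) := by
  rw [mNorm, ← smul_eq_mul, ← Real.sSup_smul_of_nonneg (abs_nonneg a)]
  refine csSup_le ((mNorm_set_nonempty x).smul_set) ?_
  rintro _ ⟨_, ⟨_, ⟨T, hT, rfl⟩, rfl⟩, rfl⟩
  dsimp only
  rcases abs_cases a with ⟨ha, -⟩ | ⟨ha, -⟩ <;> rw [ha, smul_eq_mul]
  · rw [← mpair_smul_right]
    exact hT.mpair_le_mNorm hm _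
  · rw [neg_mul, ← mpair_smul_right, ← mpair_neg_left, ← treeMeasure_negTree hT]
    exact (isAppropriate_negTree hT).mpair_le_mNorm hm _

end Tree

/-! ### Restricting a tree to a set -/

section Restriction

variable (E : Finset ℕ)

def restrictNode (α : GNode) : GNode := α.map fun t => (t.1, t.2.1 ∩ E, t.2.2)

def meetingNodes (T : Finset GNode) : Finset GNode := T.filter fun α => (iEnt α ∩ E).Nonempty

def restrictTree (T : Finset GNode) : Finset GNode := (meetingNodes E T).image (restrictNode E)

variable {E}

lemma mem_meetingNodes {T : Finset GNode} {α : GNode} :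
    α ∈ meetingNodes E T ↔ α ∈ T ∧ (iEnt α ∩ E).Nonempty :=
  Finset.mem_filter

@[simp]
lemma length_restrictNode (α : GNode) : (restrictNode E α).length = α.length :=
  List.length_map _

lemma restrictNode_take (α : GNode) (k : ℕ) :
    restrictNode E (α.take k) = (restrictNode E α).take k :=
  List.map_take

lemma restrictNode_last (α : GNode) :
    mEnt (restrictNode E α) = mEnt α ∧ iEnt (restrictNode E α) = iEnt α ∩ E ∧
      sEnt (restrictNode E α) = sEnt α := by
  rcases List.eq_nil_or_concat α with rfl | ⟨l, t, rfl⟩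
  · simp [restrictNode, mEnt, iEnt, sEnt]
  · simp [restrictNode]

lemma nodeCoeff_restrictNode (α : GNode) : nodeCoeff (restrictNode E α) = nodeCoeff α := by
  rw [nodeCoeff, nodeCoeff, (restrictNode_last α).2.2]
  simp only [mWeight, epsProd, restrictNode, ← List.map_dropLast, List.map_map]
  rfl

lemma childrenIn_meetingNodes (T : Finset GNode) (α : GNode) :
    childrenIn (meetingNodes E T) α = (childrenIn T α).filter fun c => (iEnt c ∩ E).Nonempty := by
  ext c
  simp only [mem_childrenIn, Finset.mem_filter, mem_meetingNodes]
  tauto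

variable {T : Finset GNode}

namespace IsAppropriate

variable (hT : IsAppropriate m n T)
include hT

lemma take_mem_meetingNodes {α : GNode} (hα : α ∈ meetingNodes E T) {k : ℕ} (hk : 0 < k) :
    α.take k ∈ meetingNodes E T := by
  obtain ⟨hα, p, hp⟩ := mem_meetingNodes.1 hα
  have hsub := hT.iEnt_subset_of_prefix (hT.take_mem hα hk) hα (List.take_prefix k α)
  exact mem_meetingNodes.2 ⟨hT.take_mem hα hk, p, Finset.inter_subset_inter_right hsub hp⟩

lemma eq_of_restrictNode_eq {γ c c' : GNode} (hγ : γ ∈ T) (hc : c ∈ childrenIn T γ)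
    (hc' : c' ∈ childrenIn T γ) (hcE : (iEnt c ∩ E).Nonempty)
    (h : restrictNode E c = restrictNode E c') : c = c' := by
  have hlast := restrictNode_last (E := E) c
  rw [h, (restrictNode_last c').1, (restrictNode_last c').2.1, (restrictNode_last c').2.2] at hlast
  obtain ⟨p, hp⟩ := hcE
  have hp' := hlast.2.1 ▸ hp
  exact hT.eq_of_mem_childrenIn hγ hc hc' (Finset.mem_inter.1 hp).1 (Finset.mem_inter.1 hp').1
    hlast.1.symm hlast.2.2.symm

lemma restrictNode_injOn : Set.InjOn (restrictNode E) (meetingNodes E T) := by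
  intro α hα β hβ h
  have hlen : α.length = β.length := by simpa using congrArg List.length h
  have key : ∀ k, α.take (k + 1) = β.take (k + 1) := by
    intro k
    induction k with
    | zero =>
      rw [hT.rootOf_spec.2.2 α (mem_meetingNodes.1 hα).1,
        hT.rootOf_spec.2.2 β (mem_meetingNodes.1 hβ).1]
    | succ k ih =>
      rcases le_or_gt α.length (k + 1) with hk | hk
      · rw [List.take_of_length_le hk, List.take_of_length_le (hlen ▸ hk)] at ih
        rw [ih]
      have hchild : ∀ δ ∈ T, k + 1 < δ.length → δ.take (k + 2) ∈ childrenIn T (δ.take (k + 1)) :=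
        fun δ hδ hk => by
          simpa [min_eq_left hk.le] using hT.take_succ_mem_childrenIn hδ
            (List.take_prefix (k + 1) δ) fun h => by
              have := congrArg List.length h; simp at this; omega
      refine hT.eq_of_restrictNode_eq (hT.take_mem (mem_meetingNodes.1 hα).1 k.succ_pos)
        (hchild α (mem_meetingNodes.1 hα).1 hk)
        (ih ▸ hchild β (mem_meetingNodes.1 hβ).1 (hlen ▸ hk))
        (mem_meetingNodes.1 (hT.take_mem_meetingNodes hα (k + 1).succ_pos)).2 ?_
      rw [restrictNode_take, restrictNode_take, h]
  have := key α.length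
  rwa [List.take_of_length_le (by omega), List.take_of_length_le (by omega)] at this

lemma restrictNode_prefix_iff :
    ∀ α ∈ meetingNodes E T, ∀ β ∈ meetingNodes E T,
      restrictNode E α <+: restrictNode E β ↔ α <+: β := by
  intro α hα β hβ
  refine ⟨fun h => ?_, fun h => h.map _⟩
  have hk : 0 < α.length := List.length_pos_iff.2 (hT.ne_nil (mem_meetingNodes.1 hα).1)
  have heq := hT.restrictNode_injOn hα (hT.take_mem_meetingNodes hβ hk)
    (by rw [restrictNode_take, List.prefix_iff_eq_take.1 h, length_restrictNode])
  exact heq ▸ List.take_prefix _ _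

lemma isTerminalIn_meetingNodes_iff {α : GNode} (hα : α ∈ meetingNodes E T) :
    IsTerminalIn (meetingNodes E T) α ↔ IsTerminalIn T α := by
  refine ⟨fun ht => by_contra fun hnt => ?_, fun ht β hβ => ht β (mem_meetingNodes.1 hβ).1⟩
  obtain ⟨hαT, p, hp⟩ := mem_meetingNodes.1 hα
  obtain ⟨j, -, -, hsup⟩ := hT.nonterminal_spec hαT hnt
  obtain ⟨c, hc, hpc⟩ := Finset.mem_sup.1 (hsup ▸ (Finset.mem_inter.1 hp).1)
  obtain ⟨hcT, hlen, hpre⟩ := mem_childrenIn.1 hc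
  have := congrArg List.length (ht c (mem_meetingNodes.2 ⟨hcT, p, Finset.mem_inter.2
    ⟨hpc, (Finset.mem_inter.1 hp).2⟩⟩) hpre)
  omega

lemma iEnt_entry_inter_nonempty {α : GNode} (hα : α ∈ meetingNodes E T)
    {t : ℕ × Finset ℕ × ℤ} (ht : t ∈ α) : (t.2.1 ∩ E).Nonempty := by
  obtain ⟨i, hi, rfl⟩ := List.mem_iff_getElem.1 ht
  have h := hT.take_mem_meetingNodes hα i.succ_pos
  have := (mem_meetingNodes.1 h).2
  rwa [← List.take_append_getElem hi, iEnt_append_singleton] at this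

lemma isAppropriate_restrictTree (hE : (meetingNodes E T).Nonempty) :
    IsAppropriate m n (restrictTree E T) := by
  have hφ := hT.restrictNode_prefix_iff (E := E)
  refine ⟨hE.image _, ?_, ?_, ?_, ?_, ?_, ?_⟩ <;> simp only [restrictTree, Finset.mem_image] <;>
    rintro _ ⟨α, hα, rfl⟩
  · simpa [restrictNode] using hT.ne_nil (mem_meetingNodes.1 hα).1
  · exact fun k hk _ => ⟨_, hT.take_mem_meetingNodes hα hk, restrictNode_take α k⟩
  · rintro _ ⟨β, hβ, rfl⟩ h₁ h₂
    rw [hT.eq_of_length_eq_one (mem_meetingNodes.1 hα).1 (mem_meetingNodes.1 hβ).1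
      (by simpa using h₁) (by simpa using h₂)]
  · intro t' ht'
    obtain ⟨t, ht, rfl⟩ := List.mem_map.1 ht'
    exact ⟨(hT.entry_spec (t := t) (mem_meetingNodes.1 hα).1 ht).1,
      hT.iEnt_entry_inter_nonempty hα ht⟩
  · intro ht
    have ht' := (hT.isTerminalIn_meetingNodes_iff hα).1 ((isTerminalIn_image_iff hφ hα).1 ht)
    obtain ⟨h₀, p, hp⟩ := hT.terminal_spec (mem_meetingNodes.1 hα).1 ht'
    refine ⟨(restrictNode_last α).1 ▸ h₀, p, ?_⟩
    obtain ⟨q, hq⟩ := (mem_meetingNodes.1 hα).2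
    rw [hp, Finset.mem_inter, Finset.mem_singleton] at hq
    rw [(restrictNode_last α).2.1, hp, Finset.inter_eq_left.2 (by simpa [← hq.1] using hq.2)]
  · intro ht
    obtain ⟨j, hj, hadm, hsup⟩ := hT.nonterminal_spec (mem_meetingNodes.1 hα).1 fun h =>
      ht ((isTerminalIn_image_iff hφ hα).2 ((hT.isTerminalIn_meetingNodes_iff hα).2 h))
    have hch := childrenIn_image (c := 0) hφ (fun β _ => length_restrictNode β) hα
    have hI : ∀ c, iEnt (restrictNode E c) = iEnt c ∩ E := fun c => (restrictNode_last c).2.1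
    refine ⟨j, (restrictNode_last α).1.trans hj, ?_, ?_⟩
    · convert hadm.inter E using 1
      rw [hch, Finset.image_image, Finset.filter_image, Finset.image_image,
        childrenIn_meetingNodes]
      exact Finset.image_congr fun c _ => hI c
    · rw [hch, Finset.sup_image, hI, hsup, childrenIn_meetingNodes]
      ext p
      simp only [Finset.mem_inter, Finset.mem_sup, Finset.mem_filter, Function.comp_apply, hI]
      constructor
      · rintro ⟨⟨c, hc, hp⟩, hpE⟩
        exact ⟨c, ⟨hc, p, Finset.mem_inter.2 ⟨hp, hpE⟩⟩, hp, hpE⟩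
      · rintro ⟨c, ⟨hc, -⟩, hp, hpE⟩
        exact ⟨⟨c, hc, hp⟩, hpE⟩

lemma mpair_restrictTree {x : ℕ →₀ ℝ} (hx : ∀ p ∈ x.support, p ∈ E) :
    mpair (treeMeasure (restrictTree E T)) x = mpair (treeMeasure T) x := by
  have hφ := hT.restrictNode_prefix_iff (E := E)
  have hterm : ∀ α ∈ (meetingNodes E T).filter (IsTerminalIn (meetingNodes E T) ·),
      α ∈ T ∧ IsTerminalIn T α ∧ pOf α ∈ E := fun α hα => by
    obtain ⟨hα, ht⟩ := Finset.mem_filter.1 hα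
    have ht' := (hT.isTerminalIn_meetingNodes_iff hα).1 ht
    obtain ⟨hαT, hE⟩ := mem_meetingNodes.1 hα
    rw [hT.iEnt_of_isTerminalIn hαT ht'] at hE
    obtain ⟨q, hq⟩ := hE
    rw [Finset.mem_inter, Finset.mem_singleton] at hq
    exact ⟨hαT, ht', hq.1 ▸ hq.2⟩
  rw [restrictTree, treeMeasure_image hφ, mpair_finsetSum_left, mpair_treeMeasure]
  refine Finset.sum_subset_zero_on_sdiff (fun α hα => Finset.mem_filter.2 ⟨(hterm α hα).1,
    (hterm α hα).2.1⟩) (fun α hα => ?_) fun α hα => ?_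
  · obtain ⟨hα, hα'⟩ := Finset.mem_sdiff.1 hα
    obtain ⟨hαT, ht⟩ := Finset.mem_filter.1 hα
    have hpE : pOf α ∉ E := fun hpE => by
      have hα'' : α ∈ meetingNodes E T :=
        mem_meetingNodes.2 ⟨hαT, pOf α, by simp [hT.iEnt_of_isTerminalIn hαT ht, hpE]⟩
      exact hα' (Finset.mem_filter.2 ⟨hα'', (hT.isTerminalIn_meetingNodes_iff hα'').2 ht⟩)
    rw [Finsupp.notMem_support_iff.1 fun h => hpE (hx _ h), mul_zero]
  · obtain ⟨hαT, ht, hpE⟩ := hterm α hα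
    rw [mpair_smul_single_left, nodeCoeff_restrictNode, pOf, (restrictNode_last α).2.1,
      hT.iEnt_of_isTerminalIn hαT ht, Finset.inter_eq_left.2 (by simpa using hpE), minF_singleton]

end IsAppropriate

lemma iEnt_subset_of_mem_restrictTree {T : Finset GNode} {α : GNode} (hα : α ∈ restrictTree E T) :
    iEnt α ⊆ E := by
  obtain ⟨β, -, rfl⟩ := Finset.mem_image.1 hα
  rw [(restrictNode_last β).2.1]
  exact Finset.inter_subset_right

lemma exists_appropriate_iEnt_subset_lt {x : ℕ →₀ ℝ} (hx : ∀ p ∈ x.support, p ∈ E) {r : ℝ}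
    (hr₀ : 0 ≤ r) (hr : r < mNorm m n x) :
    ∃ T, IsAppropriate m n T ∧ (∀ α ∈ T, iEnt α ⊆ E) ∧ r < mpair (treeMeasure T) x := by
  obtain ⟨T, hT, hlt⟩ := exists_lt_mpair hr
  have hE : (meetingNodes E T).Nonempty := by
    rw [mpair_treeMeasure] at hlt
    obtain ⟨α, hα, hne⟩ := Finset.exists_ne_zero_of_sum_ne_zero (hr₀.trans_lt hlt).ne'
    obtain ⟨hαT, ht⟩ := Finset.mem_filter.1 hα
    refine ⟨α, mem_meetingNodes.2 ⟨hαT, pOf α, ?_⟩⟩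
    simpa [hT.iEnt_of_isTerminalIn hαT ht] using
      hx _ (Finsupp.mem_support_iff.2 (right_ne_zero_of_mul hne))
  exact ⟨restrictTree E T, hT.isAppropriate_restrictTree hE,
    fun α hα => iEnt_subset_of_mem_restrictTree hα, (hT.mpair_restrictTree hx).symm ▸ hlt⟩

end Restriction

/-! ### Grafting trees onto a common root -/

section Graft

variable {k : ℕ} {T : ℕ → Finset GNode}

def graftTree (r : ℕ × Finset ℕ × ℤ) (k : ℕ) (T : ℕ → Finset GNode) : Finset GNode :=
  insert [r] (((Finset.range k).biUnion T).image (List.cons r))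

lemma cons_prefix_iff_on (r : ℕ × Finset ℕ × ℤ) (S : Finset GNode) :
    ∀ α ∈ S, ∀ β ∈ S, r :: α <+: r :: β ↔ α <+: β :=
  fun _ _ _ _ => List.cons_prefix_cons.trans (and_iff_right rfl)

lemma childrenIn_insert_cons (r : ℕ × Finset ℕ × ℤ) (S : Finset GNode) (α : GNode) :
    childrenIn (insert [r] S) (r :: α) = childrenIn S (r :: α) := by
  ext β
  simp only [mem_childrenIn, Finset.mem_insert]
  refine ⟨fun ⟨h, hl, hp⟩ => ⟨h.resolve_left fun h => ?_, hl, hp⟩,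
    fun ⟨h, hl, hp⟩ => ⟨Or.inr h, hl, hp⟩⟩
  subst h
  simp at hl

lemma isTerminalIn_insert_cons {r : ℕ × Finset ℕ × ℤ} {S : Finset GNode} {α : GNode}
    (hα : α ≠ []) : IsTerminalIn (insert [r] S) (r :: α) ↔ IsTerminalIn S (r :: α) := by
  simp only [IsTerminalIn, Finset.forall_mem_insert]
  refine ⟨fun h => h.2, fun h => ⟨fun hp => absurd hp.length_le ?_, h⟩⟩
  simpa using hα

variable (hT : ∀ i < k, IsAppropriate m n (T i))
  (hord : ∀ i j, i < j → j < k → FinLt (iEnt (rootOf (T i))) (iEnt (rootOf (T j))))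
include hT hord

/-- A node and its descendants share the root, and distinct trees have distinct roots. -/
lemma index_eq_of_prefix {i i' : ℕ} (hi : i < k) (hi' : i' < k) {α β : GNode} (hα : α ∈ T i)
    (hβ : β ∈ T i') (hpre : α <+: β) : i = i' := by
  have hroot : rootOf (T i) = rootOf (T i') := by
    rw [← (hT i hi).rootOf_spec.2.2 α hα, ← (hT i' hi').rootOf_spec.2.2 β hβ,
      List.prefix_iff_eq_take.1 hpre, List.take_take,
      min_eq_left (List.length_pos_iff.2 ((hT i hi).ne_nil hα))]
  obtain ⟨p, hp⟩ := (hT i hi).iEnt_nonempty (hT i hi).rootOf_spec.1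
  rcases lt_trichotomy i i' with h | h | h
  · exact absurd (hord i i' h hi' p hp p (hroot ▸ hp)) (lt_irrefl p)
  · exact h
  · exact absurd (hord i' i h hi p (hroot ▸ hp) p hp) (lt_irrefl p)

lemma mem_of_prefix_of_mem_forest {i : ℕ} (hi : i < k) {α β : GNode} (hα : α ∈ T i)
    (hβ : β ∈ (Finset.range k).biUnion T) (hpre : α <+: β) : β ∈ T i := by
  obtain ⟨i', hi', hβ'⟩ := Finset.mem_biUnion.1 hβ
  rwa [index_eq_of_prefix hT hord hi (Finset.mem_range.1 hi') hα hβ' hpre]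

lemma isTerminalIn_forest_iff {i : ℕ} (hi : i < k) {α : GNode} (hα : α ∈ T i) :
    IsTerminalIn ((Finset.range k).biUnion T) α ↔ IsTerminalIn (T i) α :=
  ⟨fun h β hβ => h β (Finset.mem_biUnion.2 ⟨i, Finset.mem_range.2 hi, hβ⟩),
    fun h β hβ hpre => h β (mem_of_prefix_of_mem_forest hT hord hi hα hβ hpre) hpre⟩

lemma childrenIn_forest {i : ℕ} (hi : i < k) {α : GNode} (hα : α ∈ T i) :
    childrenIn ((Finset.range k).biUnion T) α = childrenIn (T i) α := by
  ext β
  simp only [mem_childrenIn]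
  exact ⟨fun ⟨hβ, hl, hp⟩ => ⟨mem_of_prefix_of_mem_forest hT hord hi hα hβ hp, hl, hp⟩,
    fun ⟨hβ, hl, hp⟩ => ⟨Finset.mem_biUnion.2 ⟨i, Finset.mem_range.2 hi, hβ⟩, hl, hp⟩⟩

lemma treeMeasure_forest :
    treeMeasure ((Finset.range k).biUnion T) = ∑ i ∈ Finset.range k, treeMeasure (T i) := by
  have hfilter : ((Finset.range k).biUnion T).filter (IsTerminalIn ((Finset.range k).biUnion T) ·)
      = (Finset.range k).biUnion fun i => (T i).filter (IsTerminalIn (T i) ·) := by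
    ext α
    simp only [Finset.mem_filter, Finset.mem_biUnion, Finset.mem_range]
    constructor
    · rintro ⟨⟨i, hi, hα⟩, ht⟩
      exact ⟨i, hi, hα, (isTerminalIn_forest_iff hT hord hi hα).1 ht⟩
    · rintro ⟨i, hi, hα, ht⟩
      exact ⟨⟨i, hi, hα⟩, (isTerminalIn_forest_iff hT hord hi hα).2 ht⟩
  rw [treeMeasure_eq, hfilter, Finset.sum_biUnion]
  · rfl
  intro i hi i' hi' hne
  refine Finset.disjoint_left.2 fun α hα hα' => hne ?_
  simp only [Finset.coe_range, Set.mem_Iio] at hi hi'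
  exact index_eq_of_prefix hT hord hi hi' (Finset.mem_filter.1 hα).1 (Finset.mem_filter.1 hα').1
    (List.prefix_refl α)

omit hT hord in
lemma mem_graftTree {r : ℕ × Finset ℕ × ℤ} {β : GNode} :
    β ∈ graftTree r k T ↔ β = [r] ∨ ∃ i < k, ∃ α ∈ T i, β = r :: α := by
  simp only [graftTree, Finset.mem_insert, Finset.mem_image, Finset.mem_biUnion, Finset.mem_range]
  exact or_congr Iff.rfl ⟨fun ⟨α, ⟨i, hi, hα⟩, h⟩ => ⟨i, hi, α, hα, h.symm⟩,
    fun ⟨i, hi, α, hα, h⟩ => ⟨α, ⟨i, hi, hα⟩, h.symm⟩⟩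

lemma isTerminalIn_graftTree_cons_iff (r : ℕ × Finset ℕ × ℤ) {i : ℕ} (hi : i < k) {α : GNode}
    (hα : α ∈ T i) : IsTerminalIn (graftTree r k T) (r :: α) ↔ IsTerminalIn (T i) α := by
  have hαU : α ∈ (Finset.range k).biUnion T := Finset.mem_biUnion.2 ⟨i, Finset.mem_range.2 hi, hα⟩
  rw [graftTree, isTerminalIn_insert_cons ((hT i hi).ne_nil hα),
    isTerminalIn_image_iff (cons_prefix_iff_on r _) hαU, isTerminalIn_forest_iff hT hord hi hα]

lemma childrenIn_graftTree_cons (r : ℕ × Finset ℕ × ℤ) {i : ℕ} (hi : i < k) {α : GNode}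
    (hα : α ∈ T i) :
    childrenIn (graftTree r k T) (r :: α) = (childrenIn (T i) α).image (List.cons r) := by
  have hαU : α ∈ (Finset.range k).biUnion T := Finset.mem_biUnion.2 ⟨i, Finset.mem_range.2 hi, hα⟩
  rw [graftTree, childrenIn_insert_cons, childrenIn_image (c := 1) (cons_prefix_iff_on r _)
    (fun _ _ => List.length_cons) hαU, childrenIn_forest hT hord hi hα]

omit hord in
lemma childrenIn_graftTree_root (r : ℕ × Finset ℕ × ℤ) :
    childrenIn (graftTree r k T) [r] = (Finset.range k).image fun i => r :: rootOf (T i) := by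
  ext β
  simp only [mem_childrenIn, mem_graftTree, Finset.mem_image, Finset.mem_range]
  constructor
  · rintro ⟨rfl | ⟨i, hi, α, hα, rfl⟩, hl, -⟩
    · simp at hl
    · refine ⟨i, hi, ?_⟩
      rw [← (hT i hi).rootOf_spec.2.2 α hα, List.take_of_length_le (by simp at hl; omega)]
  · rintro ⟨i, hi, rfl⟩
    exact ⟨Or.inr ⟨i, hi, _, (hT i hi).rootOf_spec.1, rfl⟩, by simp [(hT i hi).rootOf_spec.2.1],
      List.cons_prefix_cons.2 ⟨rfl, List.nil_prefix⟩⟩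

omit hord in
lemma not_isTerminalIn_graftTree_root (hk : 0 < k) (r : ℕ × Finset ℕ × ℤ) :
    ¬ IsTerminalIn (graftTree r k T) [r] :=
  not_isTerminalIn_of_mem_childrenIn ((childrenIn_graftTree_root hT r).symm ▸
    Finset.mem_image_of_mem _ (Finset.mem_range.2 hk) : r :: rootOf (T 0) ∈ _)

lemma treeMeasure_graftTree (hk : 0 < k) (r : ℕ × Finset ℕ × ℤ) :
    treeMeasure (graftTree r k T) =
      ((r.1 : ℝ)⁻¹ * r.2.2) • ∑ i ∈ Finset.range k, treeMeasure (T i) := by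
  set U := (Finset.range k).biUnion T
  have hU : ∀ α ∈ U, α ≠ [] := fun α hα => by
    obtain ⟨i, hi, hα⟩ := Finset.mem_biUnion.1 hα
    exact (hT i (Finset.mem_range.1 hi)).ne_nil hα
  have hfilter : (graftTree r k T).filter (IsTerminalIn (graftTree r k T) ·) =
      (U.image (List.cons r)).filter (IsTerminalIn (U.image (List.cons r)) ·) := by
    have h₀ := not_isTerminalIn_graftTree_root hT hk r
    unfold graftTree at h₀ ⊢
    rw [Finset.filter_insert, if_neg h₀]
    refine Finset.filter_congr fun β hβ => ?_
    obtain ⟨α, hα, rfl⟩ := Finset.mem_image.1 hβ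
    exact isTerminalIn_insert_cons (hU α hα)
  rw [← treeMeasure_forest hT hord, treeMeasure_eq, hfilter,
    filter_isTerminalIn_image (cons_prefix_iff_on r U), Finset.sum_image
      (List.cons_injective.injOn), treeMeasure_eq, Finset.smul_sum]
  refine Finset.sum_congr rfl fun α hα => ?_
  have hα := hU α (Finset.mem_filter.1 hα).1
  rw [nodeCoeff_cons r hα, pOf_cons r hα, smul_smul]

lemma image_iEnt_childrenIn_graftTree_cons (r : ℕ × Finset ℕ × ℤ) {i : ℕ} (hi : i < k)
    {α : GNode} (hα : α ∈ T i) :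
    (childrenIn (graftTree r k T) (r :: α)).image iEnt = (childrenIn (T i) α).image iEnt := by
  rw [childrenIn_graftTree_cons hT hord r hi hα, Finset.image_image]
  exact Finset.image_congr fun c hc => iEnt_cons r ((hT i hi).ne_nil (mem_childrenIn.1 hc).1)

omit hord in
lemma image_iEnt_childrenIn_graftTree_root (r : ℕ × Finset ℕ × ℤ) :
    (childrenIn (graftTree r k T) [r]).image iEnt =
      (Finset.range k).image fun i => iEnt (rootOf (T i)) := by
  rw [childrenIn_graftTree_root hT, Finset.image_image]
  exact Finset.image_congr fun i hi =>
    iEnt_cons r ((hT i (Finset.mem_range.1 hi)).ne_nil (hT i (Finset.mem_range.1 hi)).rootOf_spec.1)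

omit hord in
lemma take_mem_graftTree (r : ℕ × Finset ℕ × ℤ) {β : GNode} (hβ : β ∈ graftTree r k T) {l : ℕ}
    (hl : 0 < l) : β.take l ∈ graftTree r k T := by
  obtain ⟨l, rfl⟩ := Nat.exists_eq_add_of_lt hl
  rcases mem_graftTree.1 hβ with rfl | ⟨i, hi, α, hα, rfl⟩
  · simpa using hβ
  rcases Nat.eq_zero_or_pos l with rfl | hl₀
  · exact Finset.mem_insert_self _ _
  · exact mem_graftTree.2 (Or.inr ⟨i, hi, _, (hT i hi).take_mem hα hl₀, by simp⟩)

omit hord in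
lemma eq_root_of_mem_graftTree (r : ℕ × Finset ℕ × ℤ) {β : GNode} (hβ : β ∈ graftTree r k T)
    (hl : β.length = 1) : β = [r] := by
  rcases mem_graftTree.1 hβ with rfl | ⟨i, hi, α, hα, rfl⟩
  · rfl
  · simp [(hT i hi).ne_nil hα] at hl

omit hord in
lemma isAppropriate_graftTree {j : ℕ} (hk : 0 < k)
    (hadm : Admissible (n j) k fun i => iEnt (rootOf (T i))) :
    IsAppropriate m n
      (graftTree (m j, (Finset.range k).sup fun i => iEnt (rootOf (T i)), 1) k T) := by
  set r : ℕ × Finset ℕ × ℤ := (m j, (Finset.range k).sup fun i => iEnt (rootOf (T i)), 1)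
  have hr : r.2.1.Nonempty := by
    obtain ⟨p, hp⟩ := hadm.1 0 hk
    exact ⟨p, Finset.mem_sup.2 ⟨0, Finset.mem_range.2 hk, hp⟩⟩
  have hsup : ∀ S : Finset GNode, S.sup iEnt = (S.image iEnt).sup id := fun S => by
    rw [Finset.sup_image, Function.id_comp]
  refine ⟨Finset.insert_nonempty _ _, ?_, fun β hβ l hl _ => take_mem_graftTree hT r hβ hl,
    fun β hβ γ hγ h h' => (eq_root_of_mem_graftTree hT r hβ h).trans
      (eq_root_of_mem_graftTree hT r hγ h').symm, ?_, ?_, ?_⟩ <;>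
    simp only [mem_graftTree] <;> rintro _ (rfl | ⟨i, hi, α, hα, rfl⟩)
  · simp
  · simp
  · rintro t (_ | ⟨_, ⟨⟩⟩)
    exact ⟨Or.inl rfl, hr⟩
  · rintro t (_ | ⟨_, ht⟩)
    · exact ⟨Or.inl rfl, hr⟩
    · exact (hT i hi).entry_spec hα ht
  · exact fun h => absurd h (not_isTerminalIn_graftTree_root hT hk r)
  · intro ht
    rw [mEnt_cons r ((hT i hi).ne_nil hα), iEnt_cons r ((hT i hi).ne_nil hα)]
    exact (hT i hi).terminal_spec hα
      ((isTerminalIn_graftTree_cons_iff hT hadm.2.1 r hi hα).1 ht)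
  · refine fun _ => ⟨j, rfl, ?_, ?_⟩
    · rw [image_iEnt_childrenIn_graftTree_root hT r]
      exact hadm.famAdmissible
    · rw [hsup, image_iEnt_childrenIn_graftTree_root hT r, Finset.sup_image, Function.id_comp]
      rfl
  · intro ht
    obtain ⟨j', hj', hadm', hα'⟩ := (hT i hi).nonterminal_spec hα fun h =>
      ht ((isTerminalIn_graftTree_cons_iff hT hadm.2.1 r hi hα).2 h)
    rw [mEnt_cons r ((hT i hi).ne_nil hα), iEnt_cons r ((hT i hi).ne_nil hα), hsup,
      image_iEnt_childrenIn_graftTree_cons hT hadm.2.1 r hi hα, ← hsup]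
    exact ⟨j', hj', hadm', hα'⟩

end Graft

/-! ### The lower `ℓ₁` estimates -/

lemma IsAppropriate.mpair_treeMeasure_congr {T : Finset GNode} (hT : IsAppropriate m n T)
    {E : Finset ℕ} (hTE : ∀ α ∈ T, iEnt α ⊆ E) {x y : ℕ →₀ ℝ} (hxy : ∀ p ∈ E, x p = y p) :
    mpair (treeMeasure T) x = mpair (treeMeasure T) y := by
  rw [mpair_treeMeasure, mpair_treeMeasure]
  refine Finset.sum_congr rfl fun α hα => ?_
  obtain ⟨hα, ht⟩ := Finset.mem_filter.1 hα
  rw [hxy _ (hTE α hα (by simp [hT.iEnt_of_isTerminalIn hα ht]))]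

lemma finsetSum_apply_of_mem_support {k : ℕ} {x : ℕ → ℕ →₀ ℝ}
    (hord : ∀ i j, i < j → j < k → FinLt (x i).support (x j).support) {i p : ℕ} (hi : i < k)
    (hp : p ∈ (x i).support) : (∑ i ∈ Finset.range k, x i) p = x i p := by
  rw [Finsupp.finsetSum_apply, Finset.sum_eq_single_of_mem i (Finset.mem_range.2 hi)]
  intro i' hi' hne
  refine Finsupp.notMem_support_iff.1 fun hp' => ?_
  rcases lt_or_gt_of_ne hne with h | h
  · exact lt_irrefl p (hord i' i h hi p hp' p hp)
  · exact lt_irrefl p (hord i i' h (Finset.mem_range.1 hi') p hp p hp')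

/-- Grafting trees living on the supports of an admissible block sequence onto a common root
with `M`-entry `m_j`. -/
lemma inv_mul_sum_mpair_le_mNorm_sum (hm : MLParams m l) {j k : ℕ} (hk : 0 < k)
    {x : ℕ → ℕ →₀ ℝ} (hadm : Admissible (n j) k fun i => (x i).support)
    {T : ℕ → Finset GNode} (hT : ∀ i < k, IsAppropriate m n (T i))
    (hTx : ∀ i < k, ∀ α ∈ T i, iEnt α ⊆ (x i).support) :
    (1 / (m j : ℝ)) * ∑ i ∈ Finset.range k, mpair (treeMeasure (T i)) (x i) ≤
      mNorm m n (∑ i ∈ Finset.range k, x i) := by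
  have hroots : Admissible (n j) k fun i => iEnt (rootOf (T i)) :=
    hadm.of_subset (fun i hi => hTx i hi _ (hT i hi).rootOf_spec.1)
      fun i hi => (hT i hi).iEnt_nonempty (hT i hi).rootOf_spec.1
  have hle := (isAppropriate_graftTree hT hk hroots).mpair_le_mNorm hm
    (∑ i ∈ Finset.range k, x i)
  rw [treeMeasure_graftTree hT hroots.2.1 hk, mpair_smul_left, mpair_finsetSum_left] at hle
  simp only [Int.cast_one, mul_one, ← one_div] at hle
  refine (le_of_eq ?_).trans hle
  refine congrArg _ (Finset.sum_congr rfl fun i hi => ?_)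
  exact (hT i (Finset.mem_range.1 hi)).mpair_treeMeasure_congr (hTx i (Finset.mem_range.1 hi))
    fun p hp => (finsetSum_apply_of_mem_support hadm.2.1 (Finset.mem_range.1 hi) hp).symm

theorem inv_mul_sum_mNorm_le_mNorm_sum (hm : MLParams m l) {j k : ℕ} {x : ℕ → ℕ →₀ ℝ}
    (hadm : Admissible (n j) k fun i => (x i).support) :
    (1 / (m j : ℝ)) * ∑ i ∈ Finset.range k, mNorm m n (x i) ≤
      mNorm m n (∑ i ∈ Finset.range k, x i) := by
  rcases Nat.eq_zero_or_pos k with rfl | hk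
  · simpa using mNorm_nonneg hm 0
  refine le_of_forall_pos_le_add fun ε hε => ?_
  have hnear : ∀ i, ∃ T, i < k → IsAppropriate m n T ∧ (∀ α ∈ T, iEnt α ⊆ (x i).support) ∧
      mNorm m n (x i) - ε / k < mpair (treeMeasure T) (x i) := fun i => by
    by_cases hi : i < k
    · have hpos := mNorm_pos (n := n) hm (Finsupp.support_nonempty_iff.1 (hadm.1 i hi))
      obtain ⟨T, hT, hTE, hlt⟩ := exists_appropriate_iEnt_subset_lt (fun p hp => hp)
        (le_max_right (mNorm m n (x i) - ε / k) 0)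
        (max_lt (sub_lt_self _ (div_pos hε (Nat.cast_pos.2 hk))) hpos)
      exact ⟨T, fun _ => ⟨hT, hTE, (le_max_left _ _).trans_lt hlt⟩⟩
    · exact ⟨∅, fun h => absurd h hi⟩
  choose T hT using hnear
  have hgraft := inv_mul_sum_mpair_le_mNorm_sum hm hk hadm (fun i hi => (hT i hi).1)
    fun i hi => (hT i hi).2.1
  have hsum : ∑ i ∈ Finset.range k, mNorm m n (x i) - ε ≤
      ∑ i ∈ Finset.range k, mpair (treeMeasure (T i)) (x i) := by
    have := Finset.sum_le_sum fun i hi => (hT i (Finset.mem_range.1 hi)).2.2.le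
    rwa [Finset.sum_sub_distrib, Finset.sum_const, Finset.card_range, nsmul_eq_mul,
      mul_div_cancel₀ _ (Nat.cast_pos.2 hk).ne'] at this
  have hc : 0 ≤ 1 / (m j : ℝ) ∧ 1 / (m j : ℝ) ≤ 1 := by
    have : (1 : ℝ) ≤ m j := by exact_mod_cast (by linarith [hm.seven_le j] : 1 ≤ m j)
    exact ⟨by positivity, (div_le_one (by linarith)).2 this⟩
  calc 1 / (m j : ℝ) * ∑ i ∈ Finset.range k, mNorm m n (x i)
      = 1 / (m j : ℝ) * (∑ i ∈ Finset.range k, mNorm m n (x i) - ε) + 1 / (m j : ℝ) * ε := by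
        ring
    _ ≤ mNorm m n (∑ i ∈ Finset.range k, x i) + ε :=
      add_le_add ((mul_le_mul_of_nonneg_left hsum hc.1).trans hgraft)
        (mul_le_of_le_one_left hε.le hc.2)

lemma IsBlockSeq.admissible {u : ℕ → ℕ →₀ ℝ} (hu : IsBlockSeq u) {n c : ℕ} {F : Finset ℕ}
    (hF : F ∈ Schreier n) {e : ℕ → ℕ} (he : StrictMonoOn e (Set.Iio c))
    (heF : ∀ s < c, e s ∈ F) : Admissible n c fun s => (u (e s)).support := by
  have hmono : StrictMono fun i => minSupp (u i) := fun _ _ h => hu.minSupp_lt h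
  refine ⟨fun s _ => Finsupp.support_nonempty_iff.2 (hu.1 _),
    fun s t hst ht => hu.finLt (he (hst.trans ht) ht hst), ?_⟩
  exact Schreier.image_mem hF (g := e) (fun s hs => heF s (Finset.mem_range.1 hs))
    (fun s _ t _ hlt => hmono.lt_iff_lt.1 hlt) fun s _ => hu.le_minSupp (e s)

theorem inv_mul_sum_abs_le_mNorm_sum_smul (hm : MLParams m l) {j : ℕ} {u : ℕ → ℕ →₀ ℝ}
    (hu : IsBlockSeq u) (hnorm : ∀ k, mNorm m n (u k) = 1) {F : Finset ℕ}
    (hF : F ∈ Schreier (n j)) (a : ℕ → ℝ) :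
    (1 / (m j : ℝ)) * ∑ i ∈ F, |a i| ≤ mNorm m n (∑ i ∈ F, a i • u i) := by
  set F' := F.filter fun i => a i ≠ 0
  have habs : ∑ i ∈ F, |a i| = ∑ i ∈ F', |a i| :=
    (Finset.sum_filter_of_ne fun i _ h => by simpa using h).symm
  have hvec : ∑ i ∈ F, a i • u i = ∑ i ∈ F', a i • u i :=
    (Finset.sum_filter_of_ne fun i _ h hai => by simp [hai] at h).symm
  obtain ⟨e, he, hrange⟩ := F'.exists_strictMonoOn_enum
  have he_mem : ∀ s < F'.card, e s ∈ F' := fun s hs =>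
    hrange ▸ Finset.mem_image_of_mem e (Finset.mem_range.2 hs)
  have hsupp : ∀ s < F'.card, (a (e s) • u (e s)).support = (u (e s)).support := fun s hs =>
    Finsupp.support_smul_eq (Finset.mem_filter.1 (he_mem s hs)).2
  have hadm := hu.admissible hF he fun s hs => (Finset.mem_filter.1 (he_mem s hs)).1
  have hsum := inv_mul_sum_mNorm_le_mNorm_sum hm (hadm.of_subset (fun s hs => (hsupp s hs).le)
    fun s hs => hsupp s hs ▸ hadm.1 s hs)
  have hre : ∀ {M : Type} [AddCommMonoid M] (f : ℕ → M),
      ∑ i ∈ F', f i = ∑ s ∈ Finset.range F'.card, f (e s) := fun f => by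
    conv_lhs => rw [← hrange]
    exact Finset.sum_image (by simpa using he.injOn)
  calc 1 / (m j : ℝ) * ∑ i ∈ F, |a i|
      = 1 / (m j : ℝ) * ∑ s ∈ Finset.range F'.card, |a (e s)| := by rw [habs, hre]
    _ ≤ 1 / (m j : ℝ) * ∑ s ∈ Finset.range F'.card, mNorm m n (a (e s) • u (e s)) := by
        gcongr with s
        simpa [hnorm] using mul_mNorm_le_mNorm_smul (n := n) hm (a (e s)) (u (e s))
    _ ≤ mNorm m n (∑ i ∈ F, a i • u i) := by rwa [hvec, hre]

theorem statement16_general (m n l : ℕ → ℕ) (hml : MLParams m l) (j : ℕ) :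
    (∀ (k : ℕ) (x : ℕ → ℕ →₀ ℝ), Admissible (n j) k (fun i => (x i).support) →
      (1 / (m j : ℝ)) * ∑ i ∈ Finset.range k, mNorm m n (x i) ≤
        mNorm m n (∑ i ∈ Finset.range k, x i)) ∧
    (∀ u : ℕ → ℕ →₀ ℝ, IsBlockSeq u → (∀ k, mNorm m n (u k) = 1) →
      ∀ F ∈ Schreier (n j), ∀ a : ℕ → ℝ,
        (1 / (m j : ℝ)) * ∑ i ∈ F, |a i| ≤ mNorm m n (∑ i ∈ F, a i • u i)) :=
  ⟨fun _ _ hadm => inv_mul_sum_mNorm_le_mNorm_sum hml hadm,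
    fun _ hu hnorm _ hF a => inv_mul_sum_abs_le_mNorm_sum_smul hml hu hnorm hF a⟩

theorem statement16 (m n l : ℕ → ℕ) (hml : MLParams m l) (hn : MGoodSeq m l n) (j : ℕ) :
    (∀ (k : ℕ) (x : ℕ → ℕ →₀ ℝ), Admissible (n j) k (fun i => (x i).support) →
      (1 / (m j : ℝ)) * ∑ i ∈ Finset.range k, mNorm m n (x i) ≤
        mNorm m n (∑ i ∈ Finset.range k, x i)) ∧
    (∀ u : ℕ → ℕ →₀ ℝ, IsBlockSeq u → (∀ k, mNorm m n (u k) = 1) →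
      ∀ F ∈ Schreier (n j), ∀ a : ℕ → ℝ,
        (1 / (m j : ℝ)) * ∑ i ∈ F, |a i| ≤ mNorm m n (∑ i ∈ F, a i • u i)) :=
  statement16_general m n l hml j

end Gasparis
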